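/- arXiv:2004.01644 — 7 statements merged into one kernel-verified Lean document; each statement's English description precedes it below -/
import Mathlib

section
/- For every real a > 1 there exists a constant C > 0 such that for all x ∈ [0,1): 0 ≤ F(a,a;2a;x) − 1 ≤ C·x·(1 + |log(1−x)|). -/
open Real Set

/-- The Gauss hypergeometric function `F(a,b;c;x) = Σₖ (a)ₖ(b)ₖ/((c)ₖ k!) xᵏ`. -/
noncomputable def hyp (a b c x : ℝ) : ℝ :=
  ∑' k : ℕ, ((ascPochhammer ℝ k).eval a * (ascPochhammer ℝ k).eval b /
    ((ascPochhammer ℝ k).eval c * (Nat.factorial k : ℝ))) * x ^ k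

/-! For `k ≥ 1` the coefficient `(a)ₖ²/((2a)ₖ k!)` of `F(a,a;2a;x)` equals
`Γ(2a)/Γ(a)² · Γ(a+k)²/(Γ(k) Γ(2a+k)) / k`, and log-convexity of `Γ` at the midpoint
`a + k` of `k` and `2a + k` bounds the middle factor by `1`. Hence `F(a,a;2a;x) - 1` is
dominated termwise by `Γ(2a)/Γ(a)² · Σ xᵏ/k = Γ(2a)/Γ(a)² · (-log(1-x))`, and
`-log(1-x) ≤ x(1 - log(1-x))`. -/

namespace Real

theorem Gamma_add_nat_eq_ascPochhammer_mul {x : ℝ} (hx : 0 < x) (k : ℕ) :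
    Gamma (x + k) = (ascPochhammer ℝ k).eval x * Gamma x := by
  induction k with
  | zero => simp
  | succ n ih =>
    rw [Nat.cast_succ, ← add_assoc, Gamma_add_one (show x + n ≠ 0 by positivity), ih,
      ascPochhammer_succ_eval]
    ring

theorem sq_Gamma_midpoint_le {s t : ℝ} (hs : 0 < s) (ht : 0 < t) :
    Gamma ((s + t) / 2) ^ 2 ≤ Gamma s * Gamma t := by
  have hconv := Gamma_mul_add_mul_le_rpow_Gamma_mul_rpow_Gamma hs ht
    (by norm_num : (0 : ℝ) < 1 / 2) (by norm_num : (0 : ℝ) < 1 / 2) (by norm_num)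
  rw [← sqrt_eq_rpow, ← sqrt_eq_rpow, ← sqrt_mul (Gamma_pos_of_pos hs).le,
    show 1 / 2 * s + 1 / 2 * t = (s + t) / 2 by ring] at hconv
  have hpos := Gamma_pos_of_pos (show 0 < (s + t) / 2 by positivity)
  exact (sq_le_sq₀ hpos.le (sqrt_nonneg _)).2 hconv |>.trans (sq_sqrt (by positivity)).le

end Real

noncomputable def hypCoeff (a b c : ℝ) (k : ℕ) : ℝ :=
  (ascPochhammer ℝ k).eval a * (ascPochhammer ℝ k).eval b /
    ((ascPochhammer ℝ k).eval c * (Nat.factorial k : ℝ))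

theorem hyp_eq_tsum_hypCoeff (a b c x : ℝ) : hyp a b c x = ∑' k, hypCoeff a b c k * x ^ k := rfl

@[simp]
theorem hypCoeff_zero (a b c : ℝ) : hypCoeff a b c 0 = 1 := by simp [hypCoeff]

theorem hypCoeff_nonneg {a b c : ℝ} (ha : 0 < a) (hb : 0 < b) (hc : 0 < c) (k : ℕ) :
    0 ≤ hypCoeff a b c k := by
  have := ascPochhammer_pos k a ha
  have := ascPochhammer_pos k b hb
  have := ascPochhammer_pos k c hc
  unfold hypCoeff
  positivity

theorem hypCoeff_le_div {a : ℝ} (ha : 0 < a) {k : ℕ} (hk : 1 ≤ k) :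
    hypCoeff a a (2 * a) k ≤ Gamma (2 * a) / Gamma a ^ 2 / k := by
  have hk0 : (0 : ℝ) < k := by exact_mod_cast hk
  have hGa := Gamma_pos_of_pos ha
  have hG2a := Gamma_pos_of_pos (show 0 < 2 * a by positivity)
  have hGk := Gamma_pos_of_pos hk0
  have hG2ak := Gamma_pos_of_pos (show 0 < 2 * a + k by positivity)
  have hfac : (k.factorial : ℝ) = k * Gamma k := by
    obtain ⟨m, rfl⟩ := Nat.exists_eq_add_one_of_ne_zero (show k ≠ 0 by omega)
    rw [← Gamma_nat_eq_factorial, Nat.cast_succ,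
      Gamma_add_one (show (m : ℝ) + 1 ≠ 0 by positivity)]
  have hlogconv : Gamma (a + k) ^ 2 ≤ Gamma k * Gamma (2 * a + k) := by
    simpa only [show ((k : ℝ) + (2 * a + k)) / 2 = a + k by ring] using
      sq_Gamma_midpoint_le hk0 (show 0 < 2 * a + k by positivity)
  have hPa : (ascPochhammer ℝ k).eval a = Gamma (a + k) / Gamma a := by
    rw [Gamma_add_nat_eq_ascPochhammer_mul ha]; field_simp
  have hP2a : (ascPochhammer ℝ k).eval (2 * a) = Gamma (2 * a + k) / Gamma (2 * a) := by
    rw [Gamma_add_nat_eq_ascPochhammer_mul (by positivity)]; field_simp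
  rw [hypCoeff, hPa, hP2a, hfac, div_le_div_iff₀ (by positivity) hk0]
  field_simp
  rw [mul_comm a 2, mul_comm (Gamma _)]
  exact hlogconv

section PowerSeries

variable {c : ℕ → ℝ} {M x : ℝ}

theorem tail_mul_pow_le (hcM : ∀ k, 1 ≤ k → c k ≤ M / k) (hx0 : 0 ≤ x) (k : ℕ) :
    c (k + 1) * x ^ (k + 1) ≤ M * (x ^ (k + 1) / (k + 1)) := by
  have := mul_le_mul_of_nonneg_right (hcM (k + 1) (by omega)) (pow_nonneg hx0 (k + 1))
  push_cast at this
  linarith [show M / (k + 1) * x ^ (k + 1) = M * (x ^ (k + 1) / (k + 1)) by ring]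

theorem summable_mul_pow_of_le_div (hc : ∀ k, 0 ≤ c k) (hcM : ∀ k, 1 ≤ k → c k ≤ M / k)
    (hx0 : 0 ≤ x) (hx1 : x < 1) : Summable fun k ↦ c k * x ^ k := by
  have hlog := hasSum_pow_div_log_of_abs_lt_one (abs_lt.2 ⟨by linarith, hx1⟩)
  refine (summable_nat_add_iff 1).1 <| Summable.of_nonneg_of_le
    (fun k ↦ mul_nonneg (hc _) (pow_nonneg hx0 _)) (tail_mul_pow_le hcM hx0)
    (hlog.summable.mul_left M)

theorem tsum_mul_pow_sub_le_neg_log (hc : ∀ k, 0 ≤ c k) (hcM : ∀ k, 1 ≤ k → c k ≤ M / k)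
    (hx0 : 0 ≤ x) (hx1 : x < 1) :
    0 ≤ ∑' k, c k * x ^ k - c 0 ∧ ∑' k, c k * x ^ k - c 0 ≤ M * -log (1 - x) := by
  have hlog := hasSum_pow_div_log_of_abs_lt_one (abs_lt.2 ⟨by linarith, hx1⟩)
  have hsum := summable_mul_pow_of_le_div hc hcM hx0 hx1
  rw [hsum.tsum_eq_zero_add, pow_zero, mul_one, add_sub_cancel_left]
  refine ⟨tsum_nonneg fun k ↦ mul_nonneg (hc _) (pow_nonneg hx0 _), ?_⟩
  rw [← (hlog.mul_left M).tsum_eq]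
  exact Summable.tsum_le_tsum (tail_mul_pow_le hcM hx0) ((summable_nat_add_iff 1).2 hsum)
    (hlog.summable.mul_left M)

end PowerSeries

theorem neg_log_one_sub_le_mul {x : ℝ} (hx1 : x < 1) :
    -log (1 - x) ≤ x * (1 + -log (1 - x)) := by
  have hy : 0 < 1 - x := by linarith
  have h := one_sub_inv_le_log_of_pos hy
  have : (1 - x) * (1 - (1 - x)⁻¹) = -x := by field_simp; ring
  nlinarith [mul_le_mul_of_nonneg_left h hy.le]

/-- For every `a > 1` there exists `C > 0` such that for all `x ∈ [0,1)`:
`0 ≤ F(a,a;2a;x) − 1 ≤ C x (1 + |log(1−x)|)`. -/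
theorem stmt3 (a : ℝ) (ha : 1 < a) :
    ∃ C > 0, ∀ x ∈ Set.Ico (0:ℝ) 1,
      0 ≤ hyp a a (2 * a) x - 1 ∧
      hyp a a (2 * a) x - 1 ≤ C * x * (1 + |Real.log (1 - x)|) := by
  have ha0 : 0 < a := by linarith
  refine ⟨Gamma (2 * a) / Gamma a ^ 2, by have := Gamma_pos_of_pos ha0; positivity, ?_⟩
  rintro x ⟨hx0, hx1⟩
  have hlog : log (1 - x) ≤ 0 := log_nonpos (by linarith) (by linarith)
  obtain ⟨hnonneg, hle⟩ := tsum_mul_pow_sub_le_neg_log (hypCoeff_nonneg ha0 ha0 (by positivity))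
    (fun k hk ↦ hypCoeff_le_div ha0 hk) hx0 hx1
  rw [hypCoeff_zero, ← hyp_eq_tsum_hypCoeff] at hnonneg hle
  refine ⟨hnonneg, hle.trans ?_⟩
  rw [abs_of_nonpos hlog, mul_assoc]
  exact mul_le_mul_of_nonneg_left (neg_log_one_sub_le_mul hx1) (by positivity)
end

section
/- Let D ⊂ ℝ³ be a bounded measurable set that is invariant under every rotation about the x₃-axis, i.e. for every θ ∈ ℝ, the point (cos θ·x₁ − sin θ·x₂, sin θ·x₁ + cos θ·x₂, x₃) belongs to D if and only if (x₁,x₂,x₃) does. Define the velocity field U(x) = (1/(4π)) ∫_D (x−y)^⊥/|x−y|³ dy, where v^⊥ := (−v₂, v₁, 0) for v = (v₁,v₂,v₃) ∈ ℝ³ (the integral converges absolutely for every x since |x−y|^{−2} is locally integrable in ℝ³). Then U(x) · x = 0 for every x ∈ ℝ³. -/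
open Real MeasureTheory

/-- The map `v ↦ v^⊥ = (−v₂, v₁, 0)` on `ℝ³`. -/
noncomputable def perp3 (v : Fin 3 → ℝ) : Fin 3 → ℝ := ![-(v 1), v 0, 0]

/-- The Euclidean norm of a vector of `ℝ³`. -/
noncomputable def norm3 (v : Fin 3 → ℝ) : ℝ := Real.sqrt (v 0 ^ 2 + v 1 ^ 2 + v 2 ^ 2)

/-- The Euclidean inner product of `ℝ³`. -/
def dot3 (u v : Fin 3 → ℝ) : ℝ := u 0 * v 0 + u 1 * v 1 + u 2 * v 2

/-- The velocity field `U(x) = (1/(4π)) ∫_D (x−y)^⊥/|x−y|³ dy` generated by the patch `D`. -/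
noncomputable def velU (D : Set (Fin 3 → ℝ)) (x : Fin 3 → ℝ) : Fin 3 → ℝ :=
  (4 * π)⁻¹ • ∫ y in D, (norm3 (x - y) ^ 3)⁻¹ • perp3 (x - y)

/-!
Fix `x` and let `R` be the reflection of `ℝ³` in a vertical plane containing `x` and the
`x₃`-axis. `R` is linear with `|det R| = 1`, fixes `x`, maps `D` onto itself (it preserves the
distance to the axis and the height) and anticommutes with `⊥`: `(Rv)^⊥ = -R(v^⊥)`. Substituting
`y = Ry` in `w = ∫_D (x-y)^⊥/|x-y|³ dy` therefore gives `w = -Rw`, whence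
`w·x = -(Rw)·x = -w·(Rx) = -w·x`.
-/

lemma exists_exp_mul_eq_of_norm_eq {p q : ℂ} (h : ‖p‖ = ‖q‖) :
    ∃ θ : ℝ, Complex.exp (θ * Complex.I) * p = q := by
  rcases eq_or_ne p 0 with rfl | hp
  · exact ⟨0, by simpa [eq_comm] using h⟩
  · obtain ⟨θ, hθ⟩ := (Complex.norm_eq_one_iff (q / p)).1 (by
      rw [norm_div, ← h, div_self (norm_ne_zero_iff.2 hp)])
    exact ⟨θ, by rw [hθ, div_mul_cancel₀ q hp]⟩

def IsAxisymmetric (D : Set (Fin 3 → ℝ)) : Prop :=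
  ∀ θ : ℝ, ∀ x : Fin 3 → ℝ,
    ![Real.cos θ * x 0 - Real.sin θ * x 1, Real.sin θ * x 0 + Real.cos θ * x 1, x 2] ∈ D ↔ x ∈ D

lemma IsAxisymmetric.mem_iff_of_sq_add_sq_eq {D : Set (Fin 3 → ℝ)} (hD : IsAxisymmetric D)
    {y z : Fin 3 → ℝ} (hr : z 0 ^ 2 + z 1 ^ 2 = y 0 ^ 2 + y 1 ^ 2) (hh : z 2 = y 2) :
    z ∈ D ↔ y ∈ D := by
  obtain ⟨θ, hθ⟩ := exists_exp_mul_eq_of_norm_eq (p := ⟨y 0, y 1⟩) (q := ⟨z 0, z 1⟩) (by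
    simp only [Complex.norm_def, Complex.normSq_mk]; congr 1; linear_combination -hr)
  have hre := congrArg Complex.re hθ
  have him := congrArg Complex.im hθ
  simp only [Complex.mul_re, Complex.mul_im, Complex.exp_ofReal_mul_I_re,
    Complex.exp_ofReal_mul_I_im] at hre him
  have hz : z = ![cos θ * y 0 - sin θ * y 1, sin θ * y 0 + cos θ * y 1, y 2] := by
    ext i; fin_cases i
    · exact hre.symm
    · simpa [add_comm] using him.symm
    · exact hh
  rw [hz, hD]

noncomputable def horizReflection (c s : ℝ) : (Fin 3 → ℝ) →ₗ[ℝ] (Fin 3 → ℝ) :=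
  Matrix.toLin' !![c, s, 0; s, -c, 0; 0, 0, 1]

section HorizReflection

variable {c s : ℝ}

@[simp] lemma horizReflection_apply (y : Fin 3 → ℝ) :
    horizReflection c s y = ![c * y 0 + s * y 1, s * y 0 - c * y 1, y 2] := by
  ext i; fin_cases i <;> simp [horizReflection, Matrix.mulVec, dotProduct, Fin.sum_univ_three,
    sub_eq_add_neg]

@[simp] lemma horizReflection_apply_zero (y : Fin 3 → ℝ) :
    horizReflection c s y 0 = c * y 0 + s * y 1 := by
  simp

@[simp] lemma horizReflection_apply_one (y : Fin 3 → ℝ) :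
    horizReflection c s y 1 = s * y 0 - c * y 1 := by
  simp

@[simp] lemma horizReflection_apply_two (y : Fin 3 → ℝ) : horizReflection c s y 2 = y 2 := by
  simp

lemma det_horizReflection : LinearMap.det (horizReflection c s) = -(c ^ 2 + s ^ 2) := by
  rw [horizReflection, LinearMap.det_toLin', Matrix.det_fin_three]
  simp [sq, add_comm, sub_eq_add_neg]

lemma horizReflection_involutive (hcs : c ^ 2 + s ^ 2 = 1) :
    Function.Involutive (horizReflection c s) := fun y => by
  ext i; fin_cases i
  · simp only [Fin.zero_eta, horizReflection_apply_zero, horizReflection_apply_one]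
    linear_combination y 0 * hcs
  · simp only [Fin.mk_one, horizReflection_apply_zero, horizReflection_apply_one]
    linear_combination y 1 * hcs
  · simp only [Fin.reduceFinMk, horizReflection_apply_two]

lemma sq_add_sq_horizReflection (hcs : c ^ 2 + s ^ 2 = 1) (y : Fin 3 → ℝ) :
    horizReflection c s y 0 ^ 2 + horizReflection c s y 1 ^ 2 = y 0 ^ 2 + y 1 ^ 2 := by
  rw [horizReflection_apply_zero, horizReflection_apply_one]
  linear_combination (y 0 ^ 2 + y 1 ^ 2) * hcs

lemma norm3_horizReflection (hcs : c ^ 2 + s ^ 2 = 1) (v : Fin 3 → ℝ) :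
    norm3 (horizReflection c s v) = norm3 v := by
  unfold norm3
  rw [sq_add_sq_horizReflection hcs]
  simp

lemma perp3_horizReflection (v : Fin 3 → ℝ) :
    perp3 (horizReflection c s v) = -horizReflection c s (perp3 v) := by
  ext i; fin_cases i <;> simp [perp3]; all_goals ring

lemma dot3_horizReflection (u v : Fin 3 → ℝ) :
    dot3 (horizReflection c s u) v = dot3 u (horizReflection c s v) := by
  simp only [dot3, horizReflection_apply_zero, horizReflection_apply_one,
    horizReflection_apply_two]
  ring

noncomputable def horizReflectionEquiv (hcs : c ^ 2 + s ^ 2 = 1) :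
    (Fin 3 → ℝ) ≃L[ℝ] (Fin 3 → ℝ) :=
  (LinearEquiv.ofInvolutive _ (horizReflection_involutive hcs)).toContinuousLinearEquiv

lemma measurePreserving_horizReflectionEquiv (hcs : c ^ 2 + s ^ 2 = 1) :
    MeasurePreserving (horizReflectionEquiv hcs) := by
  refine ⟨(horizReflectionEquiv hcs).continuous.measurable, ?_⟩
  have hdet : LinearMap.det (horizReflection c s) = -1 := by rw [det_horizReflection, hcs]
  show Measure.map (horizReflection c s) volume = volume
  rw [Real.map_linearMap_volume_pi_eq_smul_volume_pi (by rw [hdet]; norm_num), hdet]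
  norm_num

end HorizReflection

lemma exists_horizReflection_eq_self (x : Fin 3 → ℝ) :
    ∃ c s : ℝ, c ^ 2 + s ^ 2 = 1 ∧ horizReflection c s x = x := by
  by_cases hx : x 0 ^ 2 + x 1 ^ 2 = 0
  · have hx0 : x 0 = 0 := by nlinarith
    have hx1 : x 1 = 0 := by nlinarith
    refine ⟨1, 0, by norm_num, ?_⟩
    ext i; fin_cases i <;> simp [hx0, hx1]
  · -- `(c, s) = (cos 2φ, sin 2φ)` where `(x 0, x 1) = r (cos φ, sin φ)`
    refine ⟨(x 0 ^ 2 - x 1 ^ 2) / (x 0 ^ 2 + x 1 ^ 2), 2 * x 0 * x 1 / (x 0 ^ 2 + x 1 ^ 2),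
      by field_simp; ring, ?_⟩
    ext i; fin_cases i <;> simp <;> field_simp <;> ring

lemma dot3_eq_dotProduct (u v : Fin 3 → ℝ) : dot3 u v = u ⬝ᵥ v := by
  simp [dot3, dotProduct, Fin.sum_univ_three]

lemma IsAxisymmetric.dot3_integral_perp_eq_zero {D : Set (Fin 3 → ℝ)} (hD : IsAxisymmetric D)
    (x : Fin 3 → ℝ) :
    dot3 (∫ y in D, (norm3 (x - y) ^ 3)⁻¹ • perp3 (x - y)) x = 0 := by
  obtain ⟨c, s, hcs, hx⟩ := exists_horizReflection_eq_self x
  set R := horizReflectionEquiv hcs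
  have hR : ⇑R = horizReflection c s := rfl
  set F : (Fin 3 → ℝ) → (Fin 3 → ℝ) := fun y => (norm3 (x - y) ^ 3)⁻¹ • perp3 (x - y)
  have hF : ∀ y, F (R y) = -R (F y) := fun y => by
    have hxy : x - R y = R (x - y) := by rw [map_sub, hR, hx]
    change (norm3 (x - R y) ^ 3)⁻¹ • perp3 (x - R y) = -R ((norm3 (x - y) ^ 3)⁻¹ • perp3 (x - y))
    rw [hxy, map_smul, hR, norm3_horizReflection hcs, perp3_horizReflection, smul_neg]
  have hRD : R ⁻¹' D = D :=
    Set.ext fun y => hD.mem_iff_of_sq_add_sq_eq (sq_add_sq_horizReflection hcs y)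
      (by rw [hR, horizReflection_apply_two])
  have hw : ∫ y in D, F y = -R (∫ y in D, F y) := calc
    ∫ y in D, F y = ∫ y in R ⁻¹' D, F (R y) :=
      ((measurePreserving_horizReflectionEquiv hcs).setIntegral_preimage_emb
        R.toHomeomorph.measurableEmbedding F D).symm
    _ = ∫ y in D, -R (F y) := by simp only [hRD, hF]
    _ = -R (∫ y in D, F y) := by rw [integral_neg, R.integral_comp_comm]
  have hneg : dot3 (∫ y in D, F y) x = -dot3 (∫ y in D, F y) x := by
    conv_lhs => rw [hw]
    rw [dot3_eq_dotProduct, neg_dotProduct, ← dot3_eq_dotProduct, hR, dot3_horizReflection, hx]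
  linarith

theorem stmt6_general (D : Set (Fin 3 → ℝ))
    (hrot : ∀ θ : ℝ, ∀ x : Fin 3 → ℝ,
      (![Real.cos θ * x 0 - Real.sin θ * x 1,
         Real.sin θ * x 0 + Real.cos θ * x 1, x 2] ∈ D) ↔ x ∈ D) :
    ∀ x : Fin 3 → ℝ, dot3 (velU D x) x = 0 := by
  intro x
  rw [velU, dot3_eq_dotProduct, smul_dotProduct, ← dot3_eq_dotProduct,
    IsAxisymmetric.dot3_integral_perp_eq_zero hrot x, smul_zero]

/-- If `D ⊂ ℝ³` is a bounded measurable set invariant under every rotation about the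
`x₃`-axis, then the associated velocity field `U(x) = (1/(4π)) ∫_D (x−y)^⊥/|x−y|³ dy`
satisfies `U(x) · x = 0` for every `x ∈ ℝ³`. -/
theorem stmt6 (D : Set (Fin 3 → ℝ)) (hmeas : MeasurableSet D)
    (hbdd : Bornology.IsBounded D)
    (hrot : ∀ θ : ℝ, ∀ x : Fin 3 → ℝ,
      (![Real.cos θ * x 0 - Real.sin θ * x 1,
         Real.sin θ * x 0 + Real.cos θ * x 1, x 2] ∈ D) ↔ x ∈ D) :
    ∀ x : Fin 3 → ℝ, dot3 (velU D x) x = 0 :=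
  stmt6_general D hrot
end

section
/- Assume r0 : [0,π] → ℝ satisfies (H1) and (H2). Then there exists a constant C > 0 such that for all φ, ϕ ∈ [0,π]: C⁻¹·(φ − ϕ)² ≤ (r0(φ) − r0(ϕ))² + (cos φ − cos ϕ)² ≤ C·(φ − ϕ)². -/
open Real Set

/-! The upper bound holds because `r0` and `cos` are Lipschitz on `[0, π]`. For the lower bound,
(H2) squeezes `r0` above `C0⁻¹ sin`, which vanishes at the same endpoints, so `r0'(0) ≥ C0⁻¹` and
`r0'(π) ≤ -C0⁻¹`; by continuity of `r0'`, `r0` is then bi-Lipschitz near each endpoint. Two points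
that are not both near the same endpoint have their midpoint `m` away from `0` and `π`, and then
`cos φ - cos ϕ = -2 sin m sin ((φ - ϕ) / 2)` is bounded below by Jordan's inequality. -/

theorem hasDerivWithinAt_Icc_left_le {f g : ℝ → ℝ} {f' g' a b : ℝ} (hab : a < b)
    (hle : ∀ x ∈ Icc a b, g x ≤ f x) (heq : g a = f a)
    (hg : HasDerivWithinAt g g' (Icc a b) a) (hf : HasDerivWithinAt f f' (Icc a b) a) :
    g' ≤ f' := by
  have hmin : IsMinOn (f - g) (Icc a b) a := fun x hx ↦ by
    simpa [heq] using hle x hx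
  have hcone := hmin.localize.hasFDerivWithinAt_nonneg (hf.sub hg).hasFDerivWithinAt
    (sub_mem_posTangentConeAt_of_segment_subset (segment_eq_Icc hab.le).subset)
  simp only [ContinuousLinearMap.toSpanSingleton_apply, smul_eq_mul] at hcone
  exact sub_nonneg.1 (nonneg_of_mul_nonneg_right hcone (sub_pos.2 hab))

theorem hasDerivWithinAt_Icc_right_le {f g : ℝ → ℝ} {f' g' a b : ℝ} (hab : a < b)
    (hle : ∀ x ∈ Icc a b, g x ≤ f x) (heq : g b = f b)
    (hg : HasDerivWithinAt g g' (Icc a b) b) (hf : HasDerivWithinAt f f' (Icc a b) b) :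
    f' ≤ g' := by
  have hmin : IsMinOn (f - g) (Icc a b) b := fun x hx ↦ by
    simpa [heq] using hle x hx
  have hcone := hmin.localize.hasFDerivWithinAt_nonneg (hf.sub hg).hasFDerivWithinAt
    (sub_mem_posTangentConeAt_of_segment_subset (by rw [segment_symm, segment_eq_Icc hab.le]))
  simp only [ContinuousLinearMap.toSpanSingleton_apply, smul_eq_mul] at hcone
  exact sub_nonpos.1 (nonpos_of_mul_nonneg_right hcone (sub_neg.2 hab))

theorem Convex.mul_abs_sub_le_abs_image_sub {f f' : ℝ → ℝ} {s : Set ℝ} {d x y : ℝ}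
    (hs : Convex ℝ s) (hf : ∀ z ∈ s, HasDerivWithinAt f (f' z) s z)
    (hf' : ∀ z ∈ s, |f' z - d| ≤ |d| / 2) (hx : x ∈ s) (hy : y ∈ s) :
    |d| / 2 * |x - y| ≤ |f x - f y| := by
  have hmvt := hs.norm_image_sub_le_of_norm_hasDerivWithin_le
    (fun z hz ↦ (hf z hz).sub ((hasDerivWithinAt_id z s).const_mul d)) (by simpa using hf') hy hx
  simp only [Real.norm_eq_abs, Pi.sub_apply, id_eq] at hmvt
  have htri : |d| * |x - y| ≤ |f x - f y| + |f x - d * x - (f y - d * y)| := by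
    rw [← abs_mul]
    calc |d * (x - y)| = |(f x - f y) - (f x - d * x - (f y - d * y))| := by ring_nf
      _ ≤ _ := abs_sub _ _
  linarith

theorem mul_min_le_sin {t : ℝ} (ht : t ∈ Icc 0 π) : 2 / π * min t (π - t) ≤ sin t := by
  rcases le_total t (π / 2) with h | h
  · exact (mul_le_mul_of_nonneg_left (min_le_left _ _) (by positivity)).trans (mul_le_sin ht.1 h)
  · rw [← sin_pi_sub]
    exact (mul_le_mul_of_nonneg_left (min_le_right _ _) (by positivity)).trans
      (mul_le_sin (by linarith [ht.2]) (by linarith))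

theorem mul_abs_sub_le_abs_cos_sub_cos {x y ε : ℝ} (hx : x ∈ Icc 0 π) (hy : y ∈ Icc 0 π)
    (hε : ε ≤ min ((x + y) / 2) (π - (x + y) / 2)) :
    4 * ε / π ^ 2 * |x - y| ≤ |cos x - cos y| := by
  have hmid : 2 / π * ε ≤ sin ((x + y) / 2) :=
    (mul_le_mul_of_nonneg_left hε (by positivity)).trans
      (mul_min_le_sin ⟨by linarith [hx.1, hy.1], by linarith [hx.2, hy.2]⟩)
  have hhalf : 2 / π * |(x - y) / 2| ≤ |sin ((x - y) / 2)| :=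
    mul_abs_le_abs_sin (by rw [abs_le]; constructor <;> linarith [hx.1, hx.2, hy.1, hy.2])
  have hmid_nonneg : 0 ≤ sin ((x + y) / 2) :=
    sin_nonneg_of_nonneg_of_le_pi (by linarith [hx.1, hy.1]) (by linarith [hx.2, hy.2])
  calc 4 * ε / π ^ 2 * |x - y| = 2 * (2 / π * ε) * (2 / π * |(x - y) / 2|) := by
        rw [abs_div, abs_two]; field_simp; ring
    _ ≤ 2 * sin ((x + y) / 2) * |sin ((x - y) / 2)| :=
        mul_le_mul (by linarith) hhalf (by positivity) (by positivity)
    _ = |cos x - cos y| := by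
        rw [cos_sub_cos, abs_mul, abs_mul, abs_neg, abs_two, abs_of_nonneg hmid_nonneg]

theorem ContDiffOn.exists_mul_abs_sub_le_abs_image_sub {f : ℝ → ℝ} {s : Set ℝ} {x₀ : ℝ}
    (hf : ContDiffOn ℝ 1 f s) (hs : Convex ℝ s) (hs' : UniqueDiffOn ℝ s) (hx₀ : x₀ ∈ s)
    (hd : derivWithin f s x₀ ≠ 0) :
    ∃ δ > 0, ∃ k > 0, ∀ x ∈ s, ∀ y ∈ s, |x - x₀| < δ → |y - x₀| < δ →
      k * |x - y| ≤ |f x - f y| := by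
  have hd' : 0 < |derivWithin f s x₀| / 2 := half_pos (abs_pos.2 hd)
  obtain ⟨δ, hδ, hnear⟩ := Metric.continuousWithinAt_iff.1
    (hf.continuousOn_derivWithin hs' le_rfl x₀ hx₀) _ hd'
  refine ⟨δ, hδ, _, hd', fun x hx y hy hxδ hyδ ↦ ?_⟩
  refine (hs.inter (convex_ball x₀ δ)).mul_abs_sub_le_abs_image_sub (fun z hz ↦ ?_)
    (fun z hz ↦ (hnear hz.1 hz.2).le) ⟨hx, hxδ⟩ ⟨hy, hyδ⟩
  exact ((hf.differentiableOn one_ne_zero z hz.1).hasDerivWithinAt).mono inter_subset_left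

theorem exists_pos_mul_sq_le_chord_sq {f : ℝ → ℝ} (hf : ContDiffOn ℝ 1 f (Icc 0 π))
    (h0 : derivWithin f (Icc 0 π) 0 ≠ 0) (hπ : derivWithin f (Icc 0 π) π ≠ 0) :
    ∃ c > 0, ∀ x ∈ Icc 0 π, ∀ y ∈ Icc 0 π,
      c * (x - y) ^ 2 ≤ (f x - f y) ^ 2 + (cos x - cos y) ^ 2 := by
  obtain ⟨δ₀, hδ₀, k₀, hk₀, hnear₀⟩ := hf.exists_mul_abs_sub_le_abs_image_sub (convex_Icc 0 π)
    (uniqueDiffOn_Icc pi_pos) (left_mem_Icc.2 pi_pos.le) h0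
  obtain ⟨δ₁, hδ₁, k₁, hk₁, hnear₁⟩ := hf.exists_mul_abs_sub_le_abs_image_sub (convex_Icc 0 π)
    (uniqueDiffOn_Icc pi_pos) (right_mem_Icc.2 pi_pos.le) hπ
  set δ := min δ₀ δ₁
  set k := min (min k₀ k₁) (4 * (δ / 2) / π ^ 2)
  have hk : 0 < k := by positivity
  refine ⟨k ^ 2, by positivity, fun x hx y hy ↦ ?_⟩
  have key : k * |x - y| ≤ |f x - f y| ∨ k * |x - y| ≤ |cos x - cos y| := by
    have hkk₀ : k ≤ k₀ := (min_le_left _ _).trans (min_le_left _ _)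
    have hkk₁ : k ≤ k₁ := (min_le_left _ _).trans (min_le_right _ _)
    have hδδ₀ : δ ≤ δ₀ := min_le_left _ _
    have hδδ₁ : δ ≤ δ₁ := min_le_right _ _
    by_cases hnear0 : x < δ ∧ y < δ
    · refine .inl ((mul_le_mul_of_nonneg_right hkk₀ (abs_nonneg _)).trans (hnear₀ x hx y hy ?_ ?_))
      all_goals rw [sub_zero, abs_lt]; constructor <;> linarith [hx.1, hy.1]
    by_cases hnearπ : π - δ < x ∧ π - δ < y
    · refine .inl ((mul_le_mul_of_nonneg_right hkk₁ (abs_nonneg _)).trans (hnear₁ x hx y hy ?_ ?_))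
      all_goals rw [abs_lt]; constructor <;> linarith [hx.2, hy.2]
    rw [not_and_or, not_lt, not_lt] at hnear0 hnearπ
    refine .inr ((mul_le_mul_of_nonneg_right (min_le_right _ _) (abs_nonneg _)).trans
      (mul_abs_sub_le_abs_cos_sub_cos hx hy (le_min ?_ ?_)))
    · rcases hnear0 with h | h <;> linarith [hx.1, hy.1]
    · rcases hnearπ with h | h <;> linarith [hx.2, hy.2]
  have hsq : ∀ u v : ℝ, k * |u| ≤ |v| → k ^ 2 * u ^ 2 ≤ v ^ 2 := fun u v h ↦ by
    rwa [← mul_pow, sq_le_sq, abs_mul, abs_of_pos hk]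
  rcases key with h | h
  · linarith [hsq _ _ h, sq_nonneg (cos x - cos y)]
  · linarith [hsq _ _ h, sq_nonneg (f x - f y)]

theorem LipschitzOnWith.chord_sq_le {f : ℝ → ℝ} {K : NNReal} {s : Set ℝ} {x y : ℝ}
    (hf : LipschitzOnWith K f s) (hx : x ∈ s) (hy : y ∈ s) :
    (f x - f y) ^ 2 + (cos x - cos y) ^ 2 ≤ (K ^ 2 + 1) * (x - y) ^ 2 := by
  have hf' : (f x - f y) ^ 2 ≤ (K * (x - y)) ^ 2 := by
    rw [sq_le_sq, abs_mul, NNReal.abs_eq]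
    simpa only [Real.dist_eq] using hf.dist_le_mul x hx y hy
  have hcos : (cos x - cos y) ^ 2 ≤ (x - y) ^ 2 := sq_le_sq.2 (abs_cos_sub_cos_le x y)
  linarith [mul_pow (K : ℝ) (x - y) 2]

theorem stmt9_general (r0 : ℝ → ℝ)
    (hC2 : ContDiffOn ℝ 2 r0 (Set.Icc 0 π))
    (h0 : r0 0 = 0) (hπ : r0 π = 0)
    (C0 : ℝ) (hC0 : 0 < C0)
    (hH2 : ∀ φ ∈ Set.Icc (0:ℝ) π, C0⁻¹ * Real.sin φ ≤ r0 φ ∧ r0 φ ≤ C0 * Real.sin φ) :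
    ∃ C > 0, ∀ φ ∈ Set.Icc (0:ℝ) π, ∀ ϕ ∈ Set.Icc (0:ℝ) π,
      C⁻¹ * (φ - ϕ) ^ 2 ≤ (r0 φ - r0 ϕ) ^ 2 + (Real.cos φ - Real.cos ϕ) ^ 2 ∧
      (r0 φ - r0 ϕ) ^ 2 + (Real.cos φ - Real.cos ϕ) ^ 2 ≤ C * (φ - ϕ) ^ 2 := by
  have hr0 : ContDiffOn ℝ 1 r0 (Icc 0 π) := hC2.of_le one_le_two
  have hderiv : ∀ x ∈ Icc 0 π, HasDerivWithinAt r0 (derivWithin r0 (Icc 0 π) x) (Icc 0 π) x :=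
    fun x hx ↦ (hr0.differentiableOn one_ne_zero x hx).hasDerivWithinAt
  have hsin_deriv : ∀ x, HasDerivWithinAt (fun t ↦ C0⁻¹ * sin t) (C0⁻¹ * cos x) (Icc 0 π) x :=
    fun x ↦ ((hasDerivAt_sin x).const_mul C0⁻¹).hasDerivWithinAt
  have hsin_le : ∀ x ∈ Icc 0 π, C0⁻¹ * sin x ≤ r0 x := fun x hx ↦ (hH2 x hx).1
  have hd0 : C0⁻¹ ≤ derivWithin r0 (Icc 0 π) 0 := by
    simpa using hasDerivWithinAt_Icc_left_le pi_pos hsin_le (by simp [h0]) (hsin_deriv 0)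
      (hderiv 0 (left_mem_Icc.2 pi_pos.le))
  have hdπ : derivWithin r0 (Icc 0 π) π ≤ -C0⁻¹ := by
    simpa using hasDerivWithinAt_Icc_right_le pi_pos hsin_le (by simp [hπ]) (hsin_deriv π)
      (hderiv π (right_mem_Icc.2 pi_pos.le))
  have hC0' : 0 < C0⁻¹ := inv_pos.2 hC0
  obtain ⟨c, hc, hlower⟩ := exists_pos_mul_sq_le_chord_sq hr0 (hC0'.trans_le hd0).ne'
    (hdπ.trans_lt (neg_neg_of_pos hC0')).ne
  obtain ⟨K, hK⟩ := hC2.exists_lipschitzOnWith two_ne_zero (convex_Icc 0 π) isCompact_Icc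
  refine ⟨max c⁻¹ (K ^ 2 + 1), by positivity, fun φ hφ ϕ hϕ ↦ ⟨?_, ?_⟩⟩
  · calc (max c⁻¹ (K ^ 2 + 1))⁻¹ * (φ - ϕ) ^ 2 ≤ c * (φ - ϕ) ^ 2 := by
          gcongr
          exact inv_le_of_inv_le₀ hc (le_max_left _ _)
      _ ≤ _ := hlower φ hφ ϕ hϕ
  · exact (hK.chord_sq_le hφ hϕ).trans (by gcongr; exact le_max_right _ _)

/-- Assume `r0 : [0,π] → ℝ` satisfies (H1) (it is C², vanishes at the endpoints and is
positive inside) and (H2) (`C0⁻¹ sin φ ≤ r0(φ) ≤ C0 sin φ`). Then there is `C > 0` such that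
for all `φ, ϕ ∈ [0,π]`:
`C⁻¹ (φ−ϕ)² ≤ (r0(φ)−r0(ϕ))² + (cos φ − cos ϕ)² ≤ C (φ−ϕ)²` (arc-chord estimate). -/
theorem stmt9 (r0 : ℝ → ℝ)
    (hC2 : ContDiffOn ℝ 2 r0 (Set.Icc 0 π))
    (h0 : r0 0 = 0) (hπ : r0 π = 0)
    (hpos : ∀ φ ∈ Set.Ioo (0:ℝ) π, 0 < r0 φ)
    (C0 : ℝ) (hC0 : 0 < C0)
    (hH2 : ∀ φ ∈ Set.Icc (0:ℝ) π, C0⁻¹ * Real.sin φ ≤ r0 φ ∧ r0 φ ≤ C0 * Real.sin φ) :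
    ∃ C > 0, ∀ φ ∈ Set.Icc (0:ℝ) π, ∀ ϕ ∈ Set.Icc (0:ℝ) π,
      C⁻¹ * (φ - ϕ) ^ 2 ≤ (r0 φ - r0 ϕ) ^ 2 + (Real.cos φ - Real.cos ϕ) ^ 2 ∧
      (r0 φ - r0 ϕ) ^ 2 + (Real.cos φ - Real.cos ϕ) ^ 2 ≤ C * (φ - ϕ) ^ 2 :=
  stmt9_general r0 hC2 h0 hπ C0 hC0 hH2
end

section
/- Assume r0 : [0,π] → ℝ satisfies (H1) and (H2). Then there exist ε > 0 and C > 0 with the following property. Let f : [0,π] × ℝ → ℝ be Lipschitz with f(0,θ) = f(π,θ) = 0 for all θ and Lipschitz norm at most ε, and set r(φ,θ) = r0(φ) + f(φ,θ) and, for s ∈ [0,1], J_s(φ,θ,ϕ,η) = (r(ϕ,η) − s·r(φ,θ))² + 2s·r(φ,θ)·r(ϕ,η)·(1 − cos(θ−η)) + (cos φ − cos ϕ)². Then for all φ ∈ [0,π/2], ϕ ∈ [0,π], θ, η ∈ [0,2π] and s ∈ [0,1]: (i) J_0(φ,θ,ϕ,η) ≥ C·sin²ϕ; (ii) J_s(φ,θ,ϕ,η)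 ≥ C·((sin²ϕ + s²φ²)·sin²((θ−η)/2) + (φ+ϕ)²·(φ−ϕ)²). -/
open Real Set

lemma sin_lb_aux {u : ℝ} (h0 : 0 ≤ u) (h1 : u ≤ 3 * π / 4) :
    2 / (3 * π) * u ≤ Real.sin u := by
  have hπ := Real.pi_pos
  rcases le_or_gt u (π / 2) with h | h
  · calc 2 / (3 * π) * u ≤ 2 / π * u := by
          apply mul_le_mul_of_nonneg_right _ h0
          rw [div_le_div_iff₀ (by positivity) (by positivity)]; nlinarith
       _ ≤ Real.sin u := Real.mul_le_sin h0 h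
  · have h2 : Real.sin u = Real.sin (π - u) := (Real.sin_pi_sub u).symm
    have h3 : 2 / π * (π - u) ≤ Real.sin (π - u) :=
      Real.mul_le_sin (by linarith) (by linarith)
    have h4 : (1:ℝ)/2 ≤ 2 / π * (π - u) := by
      have e : 2 / π * (π/4) = 1/2 := by field_simp; ring
      rw [← e]
      exact mul_le_mul_of_nonneg_left (by linarith) (by positivity)
    have h5 : 2 / (3 * π) * u ≤ 1/2 := by
      rw [div_mul_eq_mul_div, div_le_div_iff₀ (by positivity) (by norm_num)]
      nlinarith
    linarith

lemma sin_sq_lb {v : ℝ} (h : |v| ≤ π/2) : (2/π*v)^2 ≤ Real.sin v ^ 2 := by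
  have hπ := Real.pi_pos
  rcases le_or_gt 0 v with hv | hv
  · have h1 : v ≤ π/2 := (le_abs_self v).trans h
    have := Real.mul_le_sin hv h1
    exact pow_le_pow_left₀ (by positivity) this 2
  · have h1 : -v ≤ π/2 := (neg_le_abs v).trans h
    have h2 := Real.mul_le_sin (by linarith : (0:ℝ) ≤ -v) h1
    have h3 : (2/π*(-v))^2 ≤ (Real.sin (-v))^2 :=
      pow_le_pow_left₀ (mul_nonneg (by positivity) (by linarith)) h2 2
    rw [Real.sin_neg] at h3
    nlinarith [h3]

lemma cos_diff_lb {φ ϕ : ℝ} (hφ0 : 0 ≤ φ) (hφ1 : φ ≤ π/2) (hϕ0 : 0 ≤ ϕ) (hϕ1 : ϕ ≤ π) :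
    4 / (9 * π^4) * ((φ + ϕ)^2 * (φ - ϕ)^2) ≤ (Real.cos φ - Real.cos ϕ)^2 := by
  have hπ := Real.pi_pos
  have hcc : Real.cos φ - Real.cos ϕ
      = -2 * Real.sin ((φ + ϕ)/2) * Real.sin ((φ - ϕ)/2) := Real.cos_sub_cos φ ϕ
  have hu : (φ + ϕ)/(3*π) ≤ Real.sin ((φ + ϕ)/2) := by
    have := sin_lb_aux (u := (φ + ϕ)/2) (by linarith) (by linarith)
    calc (φ + ϕ)/(3*π) = 2/(3*π) * ((φ+ϕ)/2) := by ring
      _ ≤ _ := this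
  have hu2 : ((φ + ϕ)/(3*π))^2 ≤ Real.sin ((φ + ϕ)/2)^2 :=
    pow_le_pow_left₀ (by positivity) hu 2
  have hv2 : (2/π*((φ - ϕ)/2))^2 ≤ Real.sin ((φ - ϕ)/2)^2 := by
    apply sin_sq_lb
    rw [abs_div, abs_two, div_le_div_iff₀ (by norm_num) (by norm_num : (0:ℝ) < 2)]
    have : |φ - ϕ| ≤ π := abs_le.2 ⟨by linarith, by linarith⟩
    linarith
  have hmul := mul_le_mul hu2 hv2 (by positivity) (sq_nonneg _)
  have e1 : (Real.cos φ - Real.cos ϕ)^2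
      = 4 * (Real.sin ((φ + ϕ)/2)^2 * Real.sin ((φ - ϕ)/2)^2) := by rw [hcc]; ring
  rw [e1]
  have e2 : 4 / (9 * π^4) * ((φ + ϕ)^2 * (φ - ϕ)^2)
      = 4 * (((φ + ϕ)/(3*π))^2 * ((2/π*((φ - ϕ)/2)))^2) := by field_simp; ring
  rw [e2]
  linarith

set_option maxHeartbeats 1000000 in
/-- Assume `r0 : [0,π] → ℝ` satisfies (H1) and (H2). Then there exist `ε > 0` and `C > 0`
such that: for any `f : [0,π] × ℝ → ℝ` with `f(0,θ) = f(π,θ) = 0`, bounded by `ε` and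
`ε`-Lipschitz (so with Lipschitz norm at most `ε`), setting `r = r0 + f` and
`J_s(φ,θ,ϕ,η) = (r(ϕ,η) − s r(φ,θ))² + 2 s r(φ,θ) r(ϕ,η)(1 − cos(θ−η)) + (cos φ − cos ϕ)²`,
one has, for all `φ ∈ [0,π/2]`, `ϕ ∈ [0,π]`, `θ, η ∈ [0,2π]`, `s ∈ [0,1]`:
(i) `J_0 ≥ C sin²ϕ`;
(ii) `J_s ≥ C ((sin²ϕ + s²φ²) sin²((θ−η)/2) + (φ+ϕ)²(φ−ϕ)²)`. -/
theorem stmt10 (r0 : ℝ → ℝ)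
    (hC2 : ContDiffOn ℝ 2 r0 (Set.Icc 0 π))
    (h0 : r0 0 = 0) (hπ : r0 π = 0)
    (hpos : ∀ φ ∈ Set.Ioo (0:ℝ) π, 0 < r0 φ)
    (C0 : ℝ) (hC0 : 0 < C0)
    (hH2 : ∀ φ ∈ Set.Icc (0:ℝ) π, C0⁻¹ * Real.sin φ ≤ r0 φ ∧ r0 φ ≤ C0 * Real.sin φ) :
    ∃ ε > 0, ∃ C > 0, ∀ f : ℝ → ℝ → ℝ,
      (∀ θ : ℝ, f 0 θ = 0 ∧ f π θ = 0) →
      (∀ φ ∈ Set.Icc (0:ℝ) π, ∀ θ : ℝ, |f φ θ| ≤ ε) →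
      (∀ φ ∈ Set.Icc (0:ℝ) π, ∀ φ' ∈ Set.Icc (0:ℝ) π, ∀ θ θ' : ℝ,
        |f φ θ - f φ' θ'| ≤ ε * (|φ - φ'| + |θ - θ'|)) →
      ∀ φ ∈ Set.Icc (0:ℝ) (π/2), ∀ ϕ ∈ Set.Icc (0:ℝ) π,
        ∀ θ ∈ Set.Icc (0:ℝ) (2*π), ∀ η ∈ Set.Icc (0:ℝ) (2*π), ∀ s ∈ Set.Icc (0:ℝ) 1,
        C * Real.sin ϕ ^ 2 ≤
          (r0 ϕ + f ϕ η) ^ 2 + (Real.cos φ - Real.cos ϕ) ^ 2 ∧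
        C * ((Real.sin ϕ ^ 2 + s ^ 2 * φ ^ 2) * Real.sin ((θ - η) / 2) ^ 2
              + (φ + ϕ) ^ 2 * (φ - ϕ) ^ 2) ≤
          ((r0 ϕ + f ϕ η) - s * (r0 φ + f φ θ)) ^ 2
            + 2 * s * (r0 φ + f φ θ) * (r0 ϕ + f ϕ η) * (1 - Real.cos (θ - η))
            + (Real.cos φ - Real.cos ϕ) ^ 2 := by
  have hπpos := Real.pi_pos
  have hπ3 := Real.pi_gt_three
  refine ⟨1/(π*C0), by positivity, min (1/(π^2*C0^2)) (4/(9*π^4)), lt_min (by positivity) (by positivity), ?_⟩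
  set ε := 1/(π*C0) with hε
  set K1 := 1/(π^2*C0^2) with hK1
  set K2 := 4/(9*π^4) with hK2
  set C := min K1 K2 with hC
  intro f hzero hbnd hlip φ hφ ϕ hϕ θ hθ η hη s hs
  obtain ⟨hφ0, hφ1⟩ := hφ
  obtain ⟨hϕ0, hϕ1⟩ := hϕ
  obtain ⟨hs0, hs1⟩ := hs
  -- lower bound on r
  have rlb : ∀ x ∈ Set.Icc (0:ℝ) π, ∀ y : ℝ, Real.sin x/(2*C0) ≤ r0 x + f x y := by
    rintro x ⟨hx0, hx1⟩ y
    have hr0 := (hH2 x ⟨hx0, hx1⟩).1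
    have hsx : 0 ≤ Real.sin x := Real.sin_nonneg_of_nonneg_of_le_pi hx0 hx1
    have hf : |f x y| ≤ Real.sin x/(2*C0) := by
      rcases le_or_gt x (π/2) with h | h
      · have hl := hlip x ⟨hx0, hx1⟩ 0 ⟨le_refl 0, le_of_lt hπpos⟩ y y
        rw [(hzero y).1] at hl
        simp only [sub_zero, sub_self, abs_zero, add_zero] at hl
        have hsin : 2/π * x ≤ Real.sin x := Real.mul_le_sin hx0 h
        have hfx : |f x y| ≤ ε * x := by
          rwa [abs_of_nonneg hx0] at hl
        have hx' : x ≤ π/2 * Real.sin x := by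
          have h2 := mul_le_mul_of_nonneg_left hsin (by positivity : (0:ℝ) ≤ π/2)
          have e2 : π/2 * (2/π * x) = x := by field_simp
          linarith
        have e : ε * (π/2 * Real.sin x) = Real.sin x/(2*C0) := by
          rw [hε]; field_simp
        have h3 := mul_le_mul_of_nonneg_left hx' (by positivity : (0:ℝ) ≤ ε)
        linarith
      · have hl := hlip x ⟨hx0, hx1⟩ π ⟨le_of_lt hπpos, le_refl π⟩ y y
        rw [(hzero y).2] at hl
        simp only [sub_zero, sub_self, abs_zero, add_zero] at hl
        have hsin : 2/π * (π - x) ≤ Real.sin (π - x) :=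
          Real.mul_le_sin (by linarith) (by linarith)
        rw [Real.sin_pi_sub] at hsin
        have e3 : |x - π| = π - x := by
          rw [abs_of_nonpos (by linarith), neg_sub]
        rw [e3] at hl
        have hx' : π - x ≤ π/2 * Real.sin x := by
          have h2 := mul_le_mul_of_nonneg_left hsin (by positivity : (0:ℝ) ≤ π/2)
          have e2 : π/2 * (2/π * (π - x)) = π - x := by field_simp
          linarith
        have e : ε * (π/2 * Real.sin x) = Real.sin x/(2*C0) := by
          rw [hε]; field_simp
        have h3 := mul_le_mul_of_nonneg_left hx' (by positivity : (0:ℝ) ≤ ε)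
        linarith
    have e : C0⁻¹ * Real.sin x - Real.sin x/(2*C0) = Real.sin x/(2*C0) := by
      field_simp; ring
    have := neg_abs_le (f x y)
    linarith
  set R := r0 ϕ + f ϕ η with hR
  set P := r0 φ + f φ θ with hP
  have hφπ : φ ≤ π := by linarith
  have hRlb : Real.sin ϕ/(2*C0) ≤ R := rlb ϕ ⟨hϕ0, hϕ1⟩ η
  have hPlb : Real.sin φ/(2*C0) ≤ P := rlb φ ⟨hφ0, hφπ⟩ θ
  have hsinϕ : 0 ≤ Real.sin ϕ := Real.sin_nonneg_of_nonneg_of_le_pi hϕ0 hϕ1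
  have hsinφ : 0 ≤ Real.sin φ := Real.sin_nonneg_of_nonneg_of_le_pi hφ0 hφπ
  have hR0 : 0 ≤ R := le_trans (by positivity) hRlb
  have hP0 : 0 ≤ P := le_trans (by positivity) hPlb
  -- squared lower bounds
  have hK14 : K1 ≤ 1/(4*C0^2) := by
    rw [hK1, div_le_div_iff₀ (by positivity) (by positivity)]
    have h9 : (9:ℝ) < π^2 := by nlinarith
    nlinarith [mul_pos hC0 hC0]
  have hR2 : K1 * Real.sin ϕ^2 ≤ R^2 := by
    have h1 : (Real.sin ϕ/(2*C0))^2 ≤ R^2 := pow_le_pow_left₀ (by positivity) hRlb 2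
    have h2 : (Real.sin ϕ/(2*C0))^2 = (1/(4*C0^2)) * Real.sin ϕ^2 := by ring
    have h3 := mul_le_mul_of_nonneg_right hK14 (sq_nonneg (Real.sin ϕ))
    rw [h2] at h1
    exact h3.trans h1
  have hPφ : φ/(π*C0) ≤ P := by
    have hsin : 2/π * φ ≤ Real.sin φ := Real.mul_le_sin hφ0 hφ1
    have e : φ/(π*C0) = (2/π * φ)/(2*C0) := by field_simp
    rw [e]
    calc (2/π * φ)/(2*C0) ≤ Real.sin φ/(2*C0) := by gcongr
      _ ≤ P := hPlb
  have hP2 : K1 * φ^2 ≤ P^2 := by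
    have h1 : (φ/(π*C0))^2 ≤ P^2 := pow_le_pow_left₀ (by positivity) hPφ 2
    have h2 : (φ/(π*C0))^2 = K1 * φ^2 := by rw [hK1]; ring
    rw [h2] at h1
    exact h1
  have hDlb : K2 * ((φ + ϕ)^2 * (φ - ϕ)^2) ≤ (Real.cos φ - Real.cos ϕ)^2 :=
    cos_diff_lb hφ0 hφ1 hϕ0 hϕ1
  have hCK1 : C ≤ K1 := min_le_left _ _
  have hCK2 : C ≤ K2 := min_le_right _ _
  constructor
  · -- part (i)
    have g1 : C * Real.sin ϕ^2 ≤ K1 * Real.sin ϕ^2 :=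
      mul_le_mul_of_nonneg_right hCK1 (sq_nonneg _)
    have := sq_nonneg (Real.cos φ - Real.cos ϕ)
    linarith
  · -- part (ii)
    set S := Real.sin ((θ - η)/2)^2 with hSdef
    have hS0 : 0 ≤ S := sq_nonneg _
    have hS1 : S ≤ 1 := by
      rw [hSdef]; exact Real.sin_sq_le_one _
    have hScos : 1 - Real.cos (θ - η) = 2 * S := by
      have := Real.sin_sq_eq_half_sub ((θ - η)/2)
      rw [show 2*((θ - η)/2) = θ - η by ring] at this
      rw [hSdef, this]; ring
    rw [hScos]
    -- main elementary inequality
    have hmain : (R^2 + s^2*P^2) * S ≤ (R - s*P)^2 + 4*(s*P*R)*S := by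
      have A : 0 ≤ (R - s*P)^2 * (1 - S) := mul_nonneg (sq_nonneg _) (by linarith)
      have B : 0 ≤ (s*P*R) * S := mul_nonneg (mul_nonneg (mul_nonneg hs0 hP0) hR0) hS0
      linarith [A, B]
    have g3a : K1 * Real.sin ϕ^2 * S ≤ R^2 * S := mul_le_mul_of_nonneg_right hR2 hS0
    have g3b : s^2 * (K1 * φ^2) * S ≤ s^2 * P^2 * S :=
      mul_le_mul_of_nonneg_right (mul_le_mul_of_nonneg_left hP2 (sq_nonneg s)) hS0
    have g1 : C * ((Real.sin ϕ^2 + s^2*φ^2) * S) ≤ K1 * ((Real.sin ϕ^2 + s^2*φ^2) * S) :=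
      mul_le_mul_of_nonneg_right hCK1 (mul_nonneg (by positivity) hS0)
    have g2 : C * ((φ + ϕ)^2 * (φ - ϕ)^2) ≤ K2 * ((φ + ϕ)^2 * (φ - ϕ)^2) :=
      mul_le_mul_of_nonneg_right hCK2 (by positivity)
    linarith [hmain, g3a, g3b, g1, g2, hDlb]
end

section
/- Assume r0 : [0,π] → ℝ satisfies (H1) and (H2). Define R̂(φ,ϕ,η) = (r0(φ) − r0(ϕ))² + 2·r0(φ)·r0(ϕ)·(1 − cos η) + (cos φ − cos ϕ)². Then there exists a constant C > 0 such that for all φ, ϕ ∈ (0,π) and η ∈ (0,2π): R̂(φ,ϕ,η) ≥ C·((φ − ϕ)² + (sin²φ + sin²ϕ)·sin²(η/2)). -/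
open Real Set Topology

/-!
Since `1 - cos η = 2 sin²(η/2)`, (H2) bounds the middle term of `R̂` below by
`4 C0⁻² sin φ sin ϕ sin²(η/2)`, and `(sin²φ + sin²ϕ) sin²(η/2)` exceeds `2 sin φ sin ϕ sin²(η/2)`
by at most `(sin φ - sin ϕ)² ≤ (φ - ϕ)²`. It remains to bound `(φ - ϕ)²` by
`(r0 φ - r0 ϕ)² + (cos φ - cos ϕ)²`. When the midpoint of `φ, ϕ` stays away from the poles, the
cosine term does it. Near the pole `0`, (H2) forces `r0'(0) ≥ C0⁻¹`, so by continuity of `r0'`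
the function `r0` grows at a linear rate on some `[0, u]`; the pole `π` is reduced to `0` by the
reflection `x ↦ π - x`.
-/

theorem hasDerivWithinAt_Icc_left_le_of_le {f g : ℝ → ℝ} {f' g' a b : ℝ} (hab : a < b)
    (hf : HasDerivWithinAt f f' (Icc a b) a) (hg : HasDerivWithinAt g g' (Icc a b) a)
    (heq : f a = g a) (hle : ∀ x ∈ Icc a b, f x ≤ g x) : f' ≤ g' := by
  have hmin : IsMinOn (g - f) (Icc a b) a := fun x hx => by
    simpa [heq] using hle x hx
  have hcone : b - a ∈ posTangentConeAt (Icc a b) a :=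
    sub_mem_posTangentConeAt_of_segment_subset (segment_eq_Icc hab.le).subset
  have := hmin.localize.hasFDerivWithinAt_nonneg (hg.sub hf).hasFDerivWithinAt hcone
  rw [ContinuousLinearMap.toSpanSingleton_apply, smul_eq_mul] at this
  exact sub_nonneg.1 (nonneg_of_mul_nonneg_right this (sub_pos.2 hab))

theorem exists_mul_sub_le_sub_of_lt_derivWithin_left {f : ℝ → ℝ} {a b m : ℝ} (hab : a < b)
    (hf : ContDiffOn ℝ 1 f (Icc a b)) (hm : m < derivWithin f (Icc a b) a) :
    ∃ u > a, ∀ x ∈ Icc a u, ∀ y ∈ Icc a u, x ≤ y → m * (y - x) ≤ f y - f x := by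
  have hcont := hf.continuousOn_derivWithin (uniqueDiffOn_Icc hab) le_rfl
  have hev : ∀ᶠ x in 𝓝[Icc a b] a, x ∈ Icc a b ∧ m < derivWithin f (Icc a b) x :=
    eventually_mem_nhdsWithin.and
      ((hcont a (left_mem_Icc.2 hab.le)).eventually (eventually_gt_nhds hm))
  rw [nhdsWithin_Icc_eq_nhdsGE hab] at hev
  obtain ⟨u, hau, hu⟩ := mem_nhdsGE_iff_exists_Icc_subset.1 hev
  have hub : u ≤ b := (hu (right_mem_Icc.2 hau.le)).1.2
  refine ⟨u, hau, (convex_Icc a u).mul_sub_le_image_sub_of_le_deriv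
    (hf.continuousOn.mono (Icc_subset_Icc_right hub)) ?_ ?_⟩
  all_goals rw [interior_Icc]
  · intro x hx
    exact ((hf.differentiableOn one_ne_zero x ⟨hx.1.le, hx.2.le.trans hub⟩).differentiableAt
      (Icc_mem_nhds hx.1 (hx.2.trans_le hub))).differentiableWithinAt
  · intro x hx
    rw [← derivWithin_of_mem_nhds (Icc_mem_nhds hx.1 (hx.2.trans_le hub))]
    exact (hu (Ioo_subset_Icc_self hx)).2.le

theorem exists_sq_mul_sq_sub_le_of_mul_sin_le {r : ℝ → ℝ} {c : ℝ} (hc : 0 < c)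
    (hr : ContDiffOn ℝ 1 r (Icc 0 π)) (h0 : r 0 = 0) (hlow : ∀ x ∈ Icc 0 π, c * sin x ≤ r x) :
    ∃ u > 0, ∀ x ∈ Icc 0 u, ∀ y ∈ Icc 0 u, (c / 2) ^ 2 * (x - y) ^ 2 ≤ (r x - r y) ^ 2 := by
  have hderiv : c ≤ derivWithin r (Icc 0 π) 0 := by
    have hsin : HasDerivWithinAt (fun x => c * sin x) c (Icc 0 π) 0 := by
      simpa using ((hasDerivAt_sin 0).const_mul c).hasDerivWithinAt
    exact hasDerivWithinAt_Icc_left_le_of_le pi_pos hsin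
      ((hr.differentiableOn one_ne_zero 0 (left_mem_Icc.2 pi_pos.le)).hasDerivWithinAt)
      (by simp [h0]) hlow
  obtain ⟨u, hu, hmono⟩ :=
    exists_mul_sub_le_sub_of_lt_derivWithin_left pi_pos hr (by linarith : c / 2 < _)
  refine ⟨u, hu, fun x hx y hy => ?_⟩
  wlog hxy : x ≤ y generalizing x y
  · simpa only [sub_sq_comm] using this y hy x hx (le_of_not_ge hxy)
  rw [sub_sq_comm x, sub_sq_comm (r x), ← mul_pow]
  exact pow_le_pow_left₀ (mul_nonneg (by positivity) (sub_nonneg.2 hxy)) (hmono x hx y hy hxy) 2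

theorem sin_le_sin_of_mem_Icc_pi_sub {δ t : ℝ} (hδ : 0 ≤ δ) (hδπ : δ ≤ π / 2)
    (ht : t ∈ Icc δ (π - δ)) : sin δ ≤ sin t := by
  rcases le_total t (π / 2) with h | h
  · exact sin_le_sin_of_le_of_le_pi_div_two (by linarith) h ht.1
  · rw [← sin_pi_sub t]
    exact sin_le_sin_of_le_of_le_pi_div_two (by linarith) (by linarith) (by linarith [ht.2])

theorem mul_abs_sub_le_abs_cos_sub {δ φ ϕ : ℝ} (hδ : 0 ≤ δ) (hδπ : δ ≤ π / 2)
    (hφ : φ ∈ Icc 0 π) (hϕ : ϕ ∈ Icc 0 π) (hmid : (φ + ϕ) / 2 ∈ Icc δ (π - δ)) :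
    2 * sin δ / π * |φ - ϕ| ≤ |cos φ - cos ϕ| := by
  have hsin_mid : sin δ ≤ sin ((φ + ϕ) / 2) := sin_le_sin_of_mem_Icc_pi_sub hδ hδπ hmid
  have hsin_half : 2 / π * |(φ - ϕ) / 2| ≤ |sin ((φ - ϕ) / 2)| :=
    mul_abs_le_abs_sin (by rw [abs_le]; constructor <;> linarith [hφ.1, hφ.2, hϕ.1, hϕ.2])
  have hsinδ : 0 ≤ sin δ := sin_nonneg_of_nonneg_of_le_pi hδ (by linarith)
  rw [cos_sub_cos, abs_mul, abs_mul, abs_neg, abs_two,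
    abs_of_nonneg (hsinδ.trans hsin_mid)]
  calc 2 * sin δ / π * |φ - ϕ| = 2 * sin δ * (2 / π * |(φ - ϕ) / 2|) := by
        rw [abs_div, abs_two]; ring
    _ ≤ 2 * sin ((φ + ϕ) / 2) * |sin ((φ - ϕ) / 2)| := by gcongr; linarith

theorem exists_mul_sq_sub_le_sq_sub_add_sq_cos_sub {r : ℝ → ℝ} {c : ℝ} (hc : 0 < c)
    (hr : ContDiffOn ℝ 1 r (Icc 0 π)) (h0 : r 0 = 0) (hπ : r π = 0)
    (hlow : ∀ x ∈ Icc 0 π, c * sin x ≤ r x) :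
    ∃ κ > 0, ∀ φ ∈ Icc 0 π, ∀ ϕ ∈ Icc 0 π,
      κ * (φ - ϕ) ^ 2 ≤ (r φ - r ϕ) ^ 2 + (cos φ - cos ϕ) ^ 2 := by
  have hreflect : MapsTo (fun x => π - x) (Icc 0 π) (Icc 0 π) := fun x hx =>
    ⟨by linarith [hx.2], by linarith [hx.1]⟩
  obtain ⟨u₀, hu₀, hnear0⟩ := exists_sq_mul_sq_sub_le_of_mul_sin_le hc hr h0 hlow
  obtain ⟨u₁, hu₁, hnearπ⟩ := exists_sq_mul_sq_sub_le_of_mul_sin_le (r := fun x => r (π - x)) hc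
    (hr.comp (contDiffOn_const.sub contDiffOn_id) hreflect) (by simpa using hπ)
    (fun x hx => by simpa only [sin_pi_sub] using hlow (π - x) (hreflect hx))
  obtain ⟨δ, hδ, hδu₀, hδu₁, hδπ⟩ : ∃ δ > 0, 2 * δ ≤ u₀ ∧ 2 * δ ≤ u₁ ∧ δ ≤ π / 2 :=
    ⟨min (min u₀ u₁) π / 2, by positivity,
      by linarith [min_le_left (min u₀ u₁) π, min_le_left u₀ u₁],
      by linarith [min_le_left (min u₀ u₁) π, min_le_right u₀ u₁],
      by linarith [min_le_right (min u₀ u₁) π]⟩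
  have hsinδ : 0 < sin δ := sin_pos_of_pos_of_lt_pi hδ (by linarith [pi_pos])
  refine ⟨min ((c / 2) ^ 2) ((2 * sin δ / π) ^ 2), lt_min (by positivity) (by positivity), ?_⟩
  intro φ hφ ϕ hϕ
  have hnear (h : (c / 2) ^ 2 * (φ - ϕ) ^ 2 ≤ (r φ - r ϕ) ^ 2) :
      min ((c / 2) ^ 2) ((2 * sin δ / π) ^ 2) * (φ - ϕ) ^ 2
        ≤ (r φ - r ϕ) ^ 2 + (cos φ - cos ϕ) ^ 2 :=
    calc _ ≤ (c / 2) ^ 2 * (φ - ϕ) ^ 2 := by gcongr; exact min_le_left _ _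
      _ ≤ _ := h.trans (le_add_of_nonneg_right (sq_nonneg _))
  rcases lt_or_ge ((φ + ϕ) / 2) δ with hlo | hlo
  · exact hnear (hnear0 φ ⟨hφ.1, by linarith [hϕ.1]⟩ ϕ ⟨hϕ.1, by linarith [hφ.1]⟩)
  rcases le_or_gt ((φ + ϕ) / 2) (π - δ) with hhi | hhi
  · have hcos := mul_abs_sub_le_abs_cos_sub hδ.le hδπ hφ hϕ ⟨hlo, hhi⟩
    calc min ((c / 2) ^ 2) ((2 * sin δ / π) ^ 2) * (φ - ϕ) ^ 2
        ≤ (2 * sin δ / π * |φ - ϕ|) ^ 2 := by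
          rw [mul_pow, sq_abs]; gcongr; exact min_le_right _ _
      _ ≤ |cos φ - cos ϕ| ^ 2 := by gcongr
      _ ≤ (r φ - r ϕ) ^ 2 + (cos φ - cos ϕ) ^ 2 := by
          rw [sq_abs]; exact le_add_of_nonneg_left (sq_nonneg _)
  · have := hnearπ (π - φ) ⟨by linarith [hφ.2], by linarith [hϕ.2]⟩
      (π - ϕ) ⟨by linarith [hϕ.2], by linarith [hφ.2]⟩
    simp only [sub_sub_cancel, sub_sub_sub_cancel_left] at this
    exact hnear (by simpa only [sub_sq_comm ϕ] using this)

theorem sin_sq_add_sin_sq_mul_le (φ ϕ θ : ℝ) :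
    (sin φ ^ 2 + sin ϕ ^ 2) * sin θ ^ 2 ≤ (φ - ϕ) ^ 2 + 2 * (sin φ * sin ϕ * sin θ ^ 2) := by
  have hsin : (sin φ - sin ϕ) ^ 2 ≤ (φ - ϕ) ^ 2 := sq_le_sq.2 (abs_sin_sub_sin_le φ ϕ)
  nlinarith [mul_le_mul_of_nonneg_left (sin_sq_le_one θ) (sq_nonneg (sin φ - sin ϕ))]

theorem sq_mul_sin_mul_sin_le_of_mul_sin_le {r : ℝ → ℝ} {c φ ϕ : ℝ} (hc : 0 ≤ c)
    (hlow : ∀ x ∈ Icc 0 π, c * sin x ≤ r x) (hφ : φ ∈ Icc 0 π) (hϕ : ϕ ∈ Icc 0 π) (η : ℝ) :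
    4 * c ^ 2 * (sin φ * sin ϕ * sin (η / 2) ^ 2) ≤ 2 * r φ * r ϕ * (1 - cos η) := by
  have hcos : 1 - cos η = 2 * sin (η / 2) ^ 2 := by
    have := cos_two_mul_eq_one_sub (η / 2)
    rw [show 2 * (η / 2) = η by ring] at this
    linarith
  have hcsinφ := mul_nonneg hc (sin_nonneg_of_nonneg_of_le_pi hφ.1 hφ.2)
  have hcsinϕ := mul_nonneg hc (sin_nonneg_of_nonneg_of_le_pi hϕ.1 hϕ.2)
  have hprod : c * sin φ * (c * sin ϕ) ≤ r φ * r ϕ :=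
    mul_le_mul (hlow φ hφ) (hlow ϕ hϕ) hcsinϕ (hcsinφ.trans (hlow φ hφ))
  rw [hcos]
  nlinarith [mul_le_mul_of_nonneg_right hprod (sq_nonneg (sin (η / 2)))]

theorem stmt11_general (r0 : ℝ → ℝ)
    (hC2 : ContDiffOn ℝ 2 r0 (Set.Icc 0 π))
    (h0 : r0 0 = 0) (hπ : r0 π = 0)
    (C0 : ℝ) (hC0 : 0 < C0)
    (hH2 : ∀ φ ∈ Set.Icc (0:ℝ) π, C0⁻¹ * Real.sin φ ≤ r0 φ ∧ r0 φ ≤ C0 * Real.sin φ) :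
    ∃ C > 0, ∀ φ ∈ Set.Ioo (0:ℝ) π, ∀ ϕ ∈ Set.Ioo (0:ℝ) π, ∀ η ∈ Set.Ioo (0:ℝ) (2*π),
      C * ((φ - ϕ) ^ 2 + (Real.sin φ ^ 2 + Real.sin ϕ ^ 2) * Real.sin (η / 2) ^ 2) ≤
        (r0 φ - r0 ϕ) ^ 2 + 2 * r0 φ * r0 ϕ * (1 - Real.cos η)
          + (Real.cos φ - Real.cos ϕ) ^ 2 := by
  have hlow : ∀ φ ∈ Icc 0 π, C0⁻¹ * sin φ ≤ r0 φ := fun φ hφ => (hH2 φ hφ).1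
  obtain ⟨κ, hκ, hradial⟩ := exists_mul_sq_sub_le_sq_sub_add_sq_cos_sub (inv_pos.2 hC0)
    (hC2.of_le (by norm_num)) h0 hπ hlow
  obtain ⟨C, hC, hCκ, hCC0⟩ : ∃ C > 0, 2 * C ≤ κ ∧ C ≤ 2 * C0⁻¹ ^ 2 :=
    ⟨min (κ / 2) (2 * C0⁻¹ ^ 2), by positivity, by linarith [min_le_left (κ / 2) (2 * C0⁻¹ ^ 2)],
      min_le_right _ _⟩
  refine ⟨C, hC, fun φ hφ ϕ hϕ η _ => ?_⟩
  have hφ' := Ioo_subset_Icc_self hφ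
  have hϕ' := Ioo_subset_Icc_self hϕ
  have hsin_prod : 0 ≤ sin φ * sin ϕ * sin (η / 2) ^ 2 := by
    have := sin_nonneg_of_nonneg_of_le_pi hφ'.1 hφ'.2
    have := sin_nonneg_of_nonneg_of_le_pi hϕ'.1 hϕ'.2
    positivity
  calc C * ((φ - ϕ) ^ 2 + (sin φ ^ 2 + sin ϕ ^ 2) * sin (η / 2) ^ 2)
      ≤ C * (2 * (φ - ϕ) ^ 2 + 2 * (sin φ * sin ϕ * sin (η / 2) ^ 2)) :=
        mul_le_mul_of_nonneg_left (by linarith [sin_sq_add_sin_sq_mul_le φ ϕ (η / 2)]) hC.le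
    _ = 2 * C * (φ - ϕ) ^ 2 + 2 * C * (sin φ * sin ϕ * sin (η / 2) ^ 2) := by ring
    _ ≤ κ * (φ - ϕ) ^ 2 + 4 * C0⁻¹ ^ 2 * (sin φ * sin ϕ * sin (η / 2) ^ 2) :=
        add_le_add (mul_le_mul_of_nonneg_right hCκ (sq_nonneg _))
          (mul_le_mul_of_nonneg_right (by linarith) hsin_prod)
    _ ≤ ((r0 φ - r0 ϕ) ^ 2 + (cos φ - cos ϕ) ^ 2) + 2 * r0 φ * r0 ϕ * (1 - cos η) :=
        add_le_add (hradial φ hφ' ϕ hϕ')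
          (sq_mul_sin_mul_sin_le_of_mul_sin_le (inv_nonneg.2 hC0.le) hlow hφ' hϕ' η)
    _ = _ := by ring

/-- Assume `r0 : [0,π] → ℝ` satisfies (H1) and (H2), and set
`R̂(φ,ϕ,η) = (r0(φ) − r0(ϕ))² + 2 r0(φ) r0(ϕ)(1 − cos η) + (cos φ − cos ϕ)²`.
Then there is `C > 0` with
`R̂(φ,ϕ,η) ≥ C ((φ−ϕ)² + (sin²φ + sin²ϕ) sin²(η/2))` for all `φ, ϕ ∈ (0,π)`, `η ∈ (0,2π)`. -/
theorem stmt11 (r0 : ℝ → ℝ)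
    (hC2 : ContDiffOn ℝ 2 r0 (Set.Icc 0 π))
    (h0 : r0 0 = 0) (hπ : r0 π = 0)
    (hpos : ∀ φ ∈ Set.Ioo (0:ℝ) π, 0 < r0 φ)
    (C0 : ℝ) (hC0 : 0 < C0)
    (hH2 : ∀ φ ∈ Set.Icc (0:ℝ) π, C0⁻¹ * Real.sin φ ≤ r0 φ ∧ r0 φ ≤ C0 * Real.sin φ) :
    ∃ C > 0, ∀ φ ∈ Set.Ioo (0:ℝ) π, ∀ ϕ ∈ Set.Ioo (0:ℝ) π, ∀ η ∈ Set.Ioo (0:ℝ) (2*π),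
      C * ((φ - ϕ) ^ 2 + (Real.sin φ ^ 2 + Real.sin ϕ ^ 2) * Real.sin (η / 2) ^ 2) ≤
        (r0 φ - r0 ϕ) ^ 2 + 2 * r0 φ * r0 ϕ * (1 - Real.cos η)
          + (Real.cos φ - Real.cos ϕ) ^ 2 :=
  stmt11_general r0 hC2 h0 hπ C0 hC0 hH2
end

section
/- Let α ∈ (0,1) and C0 > 0. Let K : [0,1]² × [0,1]² → ℝ be measurable, differentiable in the first pair of variables off the diagonal sets {x₁ = y₁} and {x₂ = y₂}, and suppose there are nonnegative measurable functions g₁, g₂, g₃, g₄ on [0,1]² with sup_{x∈[0,1]} ∫₀¹ g_i(x,y) dy ≤ 1 (i = 1,…,4) such that: |K(x₁,x₂,y₁,y₂)| ≤ C0·|x₁−y₁|^{α−1}·g₁(x₂,y₂), |K(x₁,x₂,y₁,y₂)| ≤ C0·|x₂−y₂|^{α−1}·g₂(x₁,y₁), |∂_{x₁}K(x₁,x₂,y₁,y₂)| ≤ C0·|x₁−y₁|^{α−2}·g₃(x₂,y₂), and |∂_{x₂}K(x₁,x₂,y₁,y₂)| ≤ C0·|x₂−y₂|^{α−2}·g₄(x₁,y₁).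 Then for every f ∈ L^∞([0,1]²) the function 𝒦f(x₁,x₂) = ∫₀¹∫₀¹ K(x₁,x₂,y₁,y₂) f(y₁,y₂) dy₁ dy₂ is well defined, bounded, and α-Hölder continuous on [0,1]², with ‖𝒦f‖_∞ + the α-Hölder seminorm of 𝒦f bounded by C·C0·‖f‖_∞ for a constant C depending only on α. -/
set_option maxHeartbeats 1000000


open Real Set MeasureTheory

/-- The unit square `[0,1]² ⊂ ℝ²`. -/
def unitSq : Set (ℝ × ℝ) := Set.Icc (0:ℝ) 1 ×ˢ Set.Icc (0:ℝ) 1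

/-- A weight `g` on `[0,1]²`: measurable, nonnegative there, with
`sup_{x ∈ [0,1]} ∫₀¹ g(x,y) dy ≤ 1`. -/
def GoodWeight (g : ℝ → ℝ → ℝ) : Prop :=
  Measurable (Function.uncurry g) ∧
  (∀ x ∈ Set.Icc (0:ℝ) 1, ∀ y ∈ Set.Icc (0:ℝ) 1, 0 ≤ g x y) ∧
  (∀ x ∈ Set.Icc (0:ℝ) 1,
    MeasureTheory.IntegrableOn (g x) (Set.Icc (0:ℝ) 1) ∧
    (∫ y in Set.Icc (0:ℝ) 1, g x y) ≤ 1)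


section Helpers
open intervalIntegral

lemma absRpowII {r : ℝ} (hr : -1 < r) (a b : ℝ) :
    IntervalIntegrable (fun t => |t| ^ r) volume a b := by
  have h0 : ∀ c : ℝ, 0 ≤ c → IntervalIntegrable (fun t => |t| ^ r) volume 0 c := by
    intro c hc
    rw [intervalIntegrable_iff, uIoc_of_le hc]
    exact (intervalIntegrable_rpow' hr (a := 0) (b := c)).1.congr_fun
      (fun t ht => by rw [abs_of_pos ht.1]) measurableSet_Ioc
  have hneg : ∀ c : ℝ, 0 ≤ c → IntervalIntegrable (fun t => |t| ^ r) volume (-c) 0 := by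
    intro c hc
    have := (h0 c hc).symm.comp_sub_left 0
    simpa [abs_neg] using this
  have haux : ∀ a : ℝ, IntervalIntegrable (fun t => |t| ^ r) volume a 0 := by
    intro a
    rcases le_or_gt a 0 with h | h
    · simpa using hneg (-a) (by linarith)
    · exact (h0 a h.le).symm
  exact (haux a).trans ((haux b).symm)


lemma shiftII {r : ℝ} (hr : -1 < r) (c p q : ℝ) :
    IntervalIntegrable (fun t => |c - t| ^ r) volume p q := by
  have := (absRpowII hr (c - p) (c - q)).comp_sub_left c
  simpa using this

lemma shiftIntOn {r : ℝ} (hr : -1 < r) (c p q : ℝ) :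
    IntegrableOn (fun t => |c - t| ^ r) (Icc p q) := by
  rcases le_or_gt p q with h | h
  · exact (intervalIntegrable_iff_integrableOn_Icc_of_le h).1 (shiftII hr c p q)
  · simp [Icc_eq_empty_of_lt h]

-- near integral value
lemma nearVal {α : ℝ} (hα : α ∈ Set.Ioo (0:ℝ) 1) (c s : ℝ) (hs : 0 ≤ s) :
    ∫ t in Icc (c - s) (c + s), |c - t| ^ (α - 1) = 2 * s ^ α / α := by
  have hr : -1 < α - 1 := by linarith [hα.1]
  rw [integral_Icc_eq_integral_Ioc, ← intervalIntegral.integral_of_le (by linarith)]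
  have hsplit : (∫ t in (c-s)..(c+s), |c - t| ^ (α - 1)) =
      (∫ t in (c-s)..c, |c - t| ^ (α - 1)) + ∫ t in c..(c+s), |c - t| ^ (α - 1) :=
    (intervalIntegral.integral_add_adjacent_intervals
      ((shiftII hr c _ _)) ((shiftII hr c _ _))).symm
  rw [hsplit]
  have h1 : (∫ t in (c-s)..c, |c - t| ^ (α - 1)) = s ^ α / α := by
    rw [intervalIntegral.integral_congr (g := fun t => (c - t) ^ (α - 1))
      (fun t ht => by
        rw [uIcc_of_le (by linarith)] at ht
        rw [abs_of_nonneg (by linarith [ht.2])]),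
      intervalIntegral.integral_comp_sub_left (fun t => t ^ (α - 1)) c]
    simp only [sub_self, sub_sub_cancel]
    rw [integral_rpow (Or.inl hr)]
    rw [sub_add_cancel, Real.zero_rpow (by linarith [hα.1] : α ≠ 0)]
    ring
  have h2 : (∫ t in c..(c+s), |c - t| ^ (α - 1)) = s ^ α / α := by
    rw [intervalIntegral.integral_congr (g := fun t => (t - c) ^ (α - 1))
      (fun t ht => by
        rw [uIcc_of_le (by linarith)] at ht
        rw [abs_sub_comm, abs_of_nonneg (by linarith [ht.1])]),
      intervalIntegral.integral_comp_sub_right (fun t => t ^ (α - 1)) c]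
    simp only [sub_self, add_sub_cancel_left]
    rw [integral_rpow (Or.inl hr)]
    rw [sub_add_cancel, Real.zero_rpow (by linarith [hα.1] : α ≠ 0)]
    ring
  rw [h1, h2]; ring


lemma nearBound {α : ℝ} (hα : α ∈ Set.Ioo (0:ℝ) 1) (c s : ℝ) (hs : 0 ≤ s)
    (S : Set ℝ) (hS : S ⊆ Icc (c - s) (c + s)) :
    ∫ t in S, |c - t| ^ (α - 1) ≤ 2 * s ^ α / α := by
  rw [← nearVal hα c s hs]
  exact setIntegral_mono_set (shiftIntOn (by linarith [hα.1]) c _ _)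
    (Filter.Eventually.of_forall fun t => Real.rpow_nonneg (abs_nonneg _) _)
    (HasSubset.Subset.eventuallyLE hS)

lemma farIntOn {α : ℝ} (hα : α ∈ Set.Ioo (0:ℝ) 1) {c s : ℝ} (hc : c ∈ Icc (0:ℝ) 1)
    (hs : 0 < s) (hs1 : s ≤ 1) :
    IntegrableOn (fun t => |c - t| ^ (α - 2)) (Icc (c-1) (c-s) ∪ Icc (c+s) (c+1)) ∧
    ∫ t in (Icc (c-1) (c-s) ∪ Icc (c+s) (c+1)), |c - t| ^ (α - 2) ≤
      2 * s ^ (α - 1) / (1 - α) := by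
  have hne : (0:ℝ) ∉ Set.uIcc s 1 := by
    rw [uIcc_of_le hs1]; exact fun h => absurd h.1 (by linarith)
  have hαne : α - 2 ≠ -1 := by
    intro h; have : α = 1 := by linarith
    exact absurd this (by linarith [hα.2])
  have hbase : IntervalIntegrable (fun t : ℝ => t ^ (α - 2)) volume s 1 :=
    intervalIntegrable_rpow (Or.inr hne)
  have hR : IntegrableOn (fun t => |c - t| ^ (α - 2)) (Icc (c+s) (c+1)) := by
    have h2 := hbase.comp_sub_right c
    rw [show s + c = c + s by ring, show 1 + c = c + 1 by ring] at h2
    exact ((intervalIntegrable_iff_integrableOn_Icc_of_le (by linarith)).1 h2).congr_fun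
      (fun t ht => by rw [abs_sub_comm, abs_of_nonneg (by linarith [ht.1])])
      measurableSet_Icc
  have hL : IntegrableOn (fun t => |c - t| ^ (α - 2)) (Icc (c-1) (c-s)) := by
    have h2 := (hbase.comp_sub_left c).symm
    exact ((intervalIntegrable_iff_integrableOn_Icc_of_le (by linarith)).1 h2).congr_fun
      (fun t ht => by rw [abs_of_nonneg (by linarith [ht.2])])
      measurableSet_Icc
  have hval : ∫ t in s..(1:ℝ), t ^ (α - 2) ≤ s ^ (α - 1) / (1 - α) := by
    rw [integral_rpow (Or.inr ⟨hαne, hne⟩), show α - 2 + 1 = α - 1 by ring,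
      Real.one_rpow]
    have hd : (1 - s ^ (α - 1)) / (α - 1) = (s ^ (α - 1) - 1) / (1 - α) := by
      rw [div_eq_div_iff (by linarith [hα.2]) (by linarith [hα.2])]; ring
    rw [hd]
    have : (0:ℝ) ≤ s ^ (α - 1) := Real.rpow_nonneg hs.le _
    rw [div_le_div_iff_of_pos_right (by linarith [hα.2] : (0:ℝ) < 1 - α)]
    linarith
  have hRval : ∫ t in Icc (c+s) (c+1), |c - t| ^ (α - 2) ≤ s ^ (α - 1) / (1 - α) := by
    rw [integral_Icc_eq_integral_Ioc, ← intervalIntegral.integral_of_le (by linarith)]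
    rw [intervalIntegral.integral_congr (g := fun t => (t - c) ^ (α - 2))
      (fun t ht => by
        rw [uIcc_of_le (by linarith)] at ht
        rw [abs_sub_comm, abs_of_nonneg (by linarith [ht.1])])]
    rw [intervalIntegral.integral_comp_sub_right (fun t => t ^ (α - 2)) c]
    rw [show c + s - c = s by ring, show c + 1 - c = 1 by ring]
    exact hval
  have hLval : ∫ t in Icc (c-1) (c-s), |c - t| ^ (α - 2) ≤ s ^ (α - 1) / (1 - α) := by
    rw [integral_Icc_eq_integral_Ioc, ← intervalIntegral.integral_of_le (by linarith)]
    rw [intervalIntegral.integral_congr (g := fun t => (c - t) ^ (α - 2))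
      (fun t ht => by
        rw [uIcc_of_le (by linarith)] at ht
        rw [abs_of_nonneg (by linarith [ht.2])])]
    rw [intervalIntegral.integral_comp_sub_left (fun t => t ^ (α - 2)) c]
    rw [show c - (c - s) = s by ring, show c - (c - 1) = 1 by ring]
    exact hval
  refine ⟨hL.union hR, ?_⟩
  rw [setIntegral_union (by
      apply Set.disjoint_left.2; intro t ht1 ht2
      have h1 := ht1.2; have h2 := ht2.1; linarith) measurableSet_Icc hL hR]
  have he : s ^ (α - 1) / (1 - α) + s ^ (α - 1) / (1 - α) = 2 * s ^ (α - 1) / (1 - α) := by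
    ring
  linarith [he]


lemma keyBound {α : ℝ} (hα : α ∈ Set.Ioo (0:ℝ) 1) {C0 : ℝ} (hC0 : 0 < C0)
    {K : ℝ × ℝ → ℝ × ℝ → ℝ} {g₁ : ℝ → ℝ → ℝ}
    (hK : Measurable (Function.uncurry K)) (hg₁ : GoodWeight g₁)
    (hb1 : ∀ x ∈ unitSq, ∀ y ∈ unitSq, x.1 ≠ y.1 →
      |K x y| ≤ C0 * |x.1 - y.1| ^ (α - 1) * g₁ x.2 y.2)
    {f : ℝ × ℝ → ℝ} (hf : Measurable f) {M : ℝ} (hM : ∀ y ∈ unitSq, |f y| ≤ M)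
    (hM0 : 0 ≤ M)
    (x : ℝ × ℝ) (hx : x ∈ unitSq) (S : Set ℝ) (hSm : MeasurableSet S)
    (hSsub : S ⊆ Icc (0:ℝ) 1) :
    IntegrableOn (fun y => K x y * f y) (S ×ˢ Icc (0:ℝ) 1) ∧
    |∫ y in S ×ˢ Icc (0:ℝ) 1, K x y * f y| ≤
      C0 * M * ∫ t in S, |x.1 - t| ^ (α - 1) := by
  obtain ⟨hx1, hx2⟩ := hx
  set φ : ℝ → ℝ := fun t => |x.1 - t| ^ (α - 1) with hφdef
  have hφ : IntegrableOn φ S := (shiftIntOn (by linarith [hα.1]) x.1 0 1).mono_set hSsub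
  have hφ0 : 0 ≤ ∫ t in S, φ t :=
    setIntegral_nonneg hSm fun t _ => Real.rpow_nonneg (abs_nonneg _) _
  have hψ := (hg₁.2.2 x.2 hx2).1
  have hψ1 := (hg₁.2.2 x.2 hx2).2
  have hψ0 : 0 ≤ ∫ y in Icc (0:ℝ) 1, g₁ x.2 y :=
    setIntegral_nonneg measurableSet_Icc fun y hy => hg₁.2.1 _ hx2 _ hy
  have hB : IntegrableOn (fun y : ℝ × ℝ => φ y.1 * g₁ x.2 y.2) (S ×ˢ Icc (0:ℝ) 1) := by
    rw [IntegrableOn, Measure.volume_eq_prod, ← Measure.prod_restrict]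
    exact hφ.mul_prod hψ
  have hB' : Integrable (fun y : ℝ × ℝ => C0 * M * (φ y.1 * g₁ x.2 y.2))
      (volume.restrict (S ×ˢ Icc (0:ℝ) 1)) := hB.const_mul _
  have hmeas : AEStronglyMeasurable (fun y => K x y * f y)
      (volume.restrict (S ×ˢ Icc (0:ℝ) 1)) :=
    (((hK.comp (measurable_prodMk_left)).mul hf)).aestronglyMeasurable.restrict
  have hZ : volume {y : ℝ × ℝ | y.1 = x.1} = 0 := by
    have he : {y : ℝ × ℝ | y.1 = x.1} = ({x.1} : Set ℝ) ×ˢ (univ : Set ℝ) := by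
      ext y
      simp only [Set.mem_setOf_eq, Set.mem_prod, Set.mem_singleton_iff, Set.mem_univ,
        and_true]
    rw [he, Measure.volume_eq_prod, Measure.prod_prod]
    simp
  have h1 : ∀ᵐ y : ℝ × ℝ ∂volume, y.1 ≠ x.1 := by
    rw [ae_iff]
    convert hZ using 2
    ext y; simp
  have hae : ∀ᵐ y ∂(volume.restrict (S ×ˢ Icc (0:ℝ) 1)),
      ‖K x y * f y‖ ≤ C0 * M * (φ y.1 * g₁ x.2 y.2) := by
    filter_upwards [ae_restrict_mem (hSm.prod measurableSet_Icc), ae_restrict_of_ae h1]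
      with y hy hne
    have hyU : y ∈ unitSq := ⟨hSsub hy.1, hy.2⟩
    have hb := hb1 x ⟨hx1, hx2⟩ y hyU (fun h => hne h.symm)
    have hfy := hM y hyU
    have h0 : 0 ≤ C0 * φ y.1 * g₁ x.2 y.2 := by
      have := hg₁.2.1 x.2 hx2 y.2 hy.2
      have := Real.rpow_nonneg (abs_nonneg (x.1 - y.1)) (α - 1)
      positivity
    calc ‖K x y * f y‖ = |K x y| * |f y| := by rw [norm_mul]; rfl
      _ ≤ (C0 * φ y.1 * g₁ x.2 y.2) * M :=
          mul_le_mul hb hfy (abs_nonneg _) h0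
      _ = C0 * M * (φ y.1 * g₁ x.2 y.2) := by ring
  constructor
  · exact hB'.mono' hmeas hae
  · calc |∫ y in S ×ˢ Icc (0:ℝ) 1, K x y * f y| ≤
        ∫ y in S ×ˢ Icc (0:ℝ) 1, C0 * M * (φ y.1 * g₁ x.2 y.2) :=
          norm_integral_le_of_norm_le hB' hae
      _ = C0 * M * ((∫ t in S, φ t) * ∫ y in Icc (0:ℝ) 1, g₁ x.2 y) := by
          rw [MeasureTheory.integral_const_mul, Measure.volume_eq_prod,
            setIntegral_prod_mul (fun t => φ t) (g₁ x.2)]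
      _ ≤ C0 * M * ∫ t in S, φ t := by
          nlinarith [mul_le_of_le_one_right (mul_nonneg (mul_nonneg hC0.le hM0) hφ0) hψ1]


lemma moveFirst {α : ℝ} (hα : α ∈ Set.Ioo (0:ℝ) 1) {C0 : ℝ} (hC0 : 0 < C0)
    {K K₁ : ℝ × ℝ → ℝ × ℝ → ℝ} {g₁ g₃ : ℝ → ℝ → ℝ}
    (hK : Measurable (Function.uncurry K)) (hg₁ : GoodWeight g₁) (hg₃ : GoodWeight g₃)
    (hb1 : ∀ x ∈ unitSq, ∀ y ∈ unitSq, x.1 ≠ y.1 →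
      |K x y| ≤ C0 * |x.1 - y.1| ^ (α - 1) * g₁ x.2 y.2)
    (hd1 : ∀ x ∈ unitSq, ∀ y ∈ unitSq, x.1 ≠ y.1 → x.2 ≠ y.2 →
      HasDerivAt (fun t : ℝ => K (t, x.2) y) (K₁ x y) x.1 ∧
      |K₁ x y| ≤ C0 * |x.1 - y.1| ^ (α - 2) * g₃ x.2 y.2)
    {f : ℝ × ℝ → ℝ} (hf : Measurable f) {M : ℝ} (hM : ∀ y ∈ unitSq, |f y| ≤ M)
    (hM0 : 0 ≤ M)
    {a a' b : ℝ} (ha : a ∈ Icc (0:ℝ) 1) (ha' : a' ∈ Icc (0:ℝ) 1)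
    (hb : b ∈ Icc (0:ℝ) 1) (hdist : |a - a'| ≤ 1/2) :
    |(∫ y in unitSq, K (a, b) y * f y) - ∫ y in unitSq, K (a', b) y * f y| ≤
      18 / (α * (1 - α)) * C0 * M * |a - a'| ^ α := by
  have hα0 := hα.1
  have hα1 : (0:ℝ) < 1 - α := by linarith [hα.2]
  rcases eq_or_ne a a' with rfl | hne
  · simp only [sub_self, abs_zero]
    rw [Real.zero_rpow (by linarith : α ≠ 0)]
    simp
  set h := |a - a'| with hh
  have hhpos : 0 < h := abs_pos.2 (sub_ne_zero.2 hne)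
  have hs1 : 2 * h ≤ 1 := by linarith
  -- sets
  set N₁ : Set ℝ := Icc (0:ℝ) 1 ∩ {t | |a - t| < 2*h} with hN₁def
  set E : Set ℝ := Icc (0:ℝ) 1 ∩ {t | 2*h ≤ |a - t|} with hEdef
  have hDIoo : {t : ℝ | |a - t| < 2*h} = Ioo (a - 2*h) (a + 2*h) := by
    ext t; rw [mem_setOf_eq, abs_lt, mem_Ioo]
    constructor <;> intro hc <;> constructor <;> linarith [hc.1, hc.2]
  have hDm : MeasurableSet {t : ℝ | |a - t| < 2*h} := by
    rw [hDIoo]; exact measurableSet_Ioo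
  have hN₁m : MeasurableSet N₁ := measurableSet_Icc.inter hDm
  have hEm : MeasurableSet E := by
    have : {t : ℝ | 2*h ≤ |a - t|} = {t : ℝ | |a - t| < 2*h}ᶜ := by
      ext t; simp [not_lt]
    exact measurableSet_Icc.inter (this ▸ hDm.compl)
  have hN₁sub : N₁ ⊆ Icc (0:ℝ) 1 := inter_subset_left
  have hEsub : E ⊆ Icc (0:ℝ) 1 := inter_subset_left
  have hunion : N₁ ∪ E = Icc (0:ℝ) 1 := by
    ext t
    simp only [hN₁def, hEdef, mem_union, mem_inter_iff, mem_setOf_eq]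
    constructor
    · rintro (ht | ht) <;> exact ht.1
    · intro ht
      rcases lt_or_ge |a - t| (2*h) with hc | hc
      · exact Or.inl ⟨ht, hc⟩
      · exact Or.inr ⟨ht, hc⟩
  have hdisj : Disjoint N₁ E := by
    apply Set.disjoint_left.2
    rintro t ⟨_, ht1⟩ ⟨_, ht2⟩
    rw [mem_setOf_eq] at ht1 ht2
    linarith
  -- integrability of pieces
  have hxU : (a, b) ∈ unitSq := ⟨ha, hb⟩
  have hx'U : (a', b) ∈ unitSq := ⟨ha', hb⟩
  have hIN := keyBound hα hC0 hK hg₁ hb1 hf hM hM0 (a, b) hxU N₁ hN₁m hN₁sub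
  have hIN' := keyBound hα hC0 hK hg₁ hb1 hf hM hM0 (a', b) hx'U N₁ hN₁m hN₁sub
  have hIE := keyBound hα hC0 hK hg₁ hb1 hf hM hM0 (a, b) hxU E hEm hEsub
  have hIE' := keyBound hα hC0 hK hg₁ hb1 hf hM hM0 (a', b) hx'U E hEm hEsub
  -- splitting
  have hsplit : ∀ z : ℝ × ℝ,
      IntegrableOn (fun y => K z y * f y) (N₁ ×ˢ Icc (0:ℝ) 1) →
      IntegrableOn (fun y => K z y * f y) (E ×ˢ Icc (0:ℝ) 1) →
      (∫ y in unitSq, K z y * f y) =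
        (∫ y in N₁ ×ˢ Icc (0:ℝ) 1, K z y * f y) +
        ∫ y in E ×ˢ Icc (0:ℝ) 1, K z y * f y := by
    intro z h1 h2
    rw [show unitSq = (N₁ ×ˢ Icc (0:ℝ) 1) ∪ (E ×ˢ Icc (0:ℝ) 1) by
      rw [← Set.union_prod, hunion]; rfl]
    exact setIntegral_union (Set.Disjoint.set_prod_left hdisj _ _) (hEm.prod measurableSet_Icc) h1 h2
  rw [hsplit (a, b) hIN.1 hIE.1, hsplit (a', b) hIN'.1 hIE'.1]
  -- near bounds
  have hnear1 : |∫ y in N₁ ×ˢ Icc (0:ℝ) 1, K (a, b) y * f y| ≤ C0 * M * (2 * (2*h)^α / α) := by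
    refine hIN.2.trans ?_
    have := nearBound hα a (2*h) (by linarith) N₁ ?_
    · exact mul_le_mul_of_nonneg_left this (by positivity)
    · intro t ht
      have := ht.2
      rw [mem_setOf_eq, abs_lt] at this
      exact ⟨by linarith [this.1], by linarith [this.2]⟩
  have hnear2 : |∫ y in N₁ ×ˢ Icc (0:ℝ) 1, K (a', b) y * f y| ≤ C0 * M * (2 * (3*h)^α / α) := by
    refine hIN'.2.trans ?_
    have := nearBound hα a' (3*h) (by linarith) N₁ ?_
    · exact mul_le_mul_of_nonneg_left this (by positivity)
    · intro t ht
      have h2 := ht.2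
      rw [mem_setOf_eq, abs_lt] at h2
      have hb1 : a - a' ≤ h := le_abs_self _
      have hb2 : a' - a ≤ h := by rw [hh, abs_sub_comm]; exact le_abs_self _
      exact ⟨by linarith [h2.1], by linarith [h2.2]⟩
  -- far bound
  have hhalf : 0 < 2*h := by linarith
  have hU := farIntOn hα ha hhalf hs1
  have hEU : E ⊆ Icc (a-1) (a-2*h) ∪ Icc (a+2*h) (a+1) := by
    rintro t ⟨ht01, ht2⟩
    rw [mem_setOf_eq] at ht2
    rcases le_total t a with hc | hc
    · left
      rw [abs_of_nonneg (by linarith)] at ht2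
      exact ⟨by linarith [ht01.1, ha.2], by linarith⟩
    · right
      rw [abs_of_nonpos (by linarith)] at ht2
      exact ⟨by linarith, by linarith [ht01.2, ha.1]⟩
  have hφE : IntegrableOn (fun t => |a - t| ^ (α - 2)) E := hU.1.mono_set hEU
  have hφEval : ∫ t in E, |a - t| ^ (α - 2) ≤ 2 * (2*h) ^ (α - 1) / (1 - α) := by
    refine le_trans (setIntegral_mono_set hU.1
      (Filter.Eventually.of_forall fun t => Real.rpow_nonneg (abs_nonneg _) _)
      (HasSubset.Subset.eventuallyLE hEU)) hU.2
  have hφE0 : 0 ≤ ∫ t in E, |a - t| ^ (α - 2) :=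
    setIntegral_nonneg hEm fun t _ => Real.rpow_nonneg (abs_nonneg _) _
  have hψ := (hg₃.2.2 b hb).1
  have hψ1 := (hg₃.2.2 b hb).2
  have hψ0 : 0 ≤ ∫ y in Icc (0:ℝ) 1, g₃ b y :=
    setIntegral_nonneg measurableSet_Icc fun y hy => hg₃.2.1 _ hb _ hy
  have hΨint : Integrable (fun y : ℝ × ℝ => 4*C0*M*h * (|a - y.1| ^ (α - 2) * g₃ b y.2))
      (volume.restrict (E ×ˢ Icc (0:ℝ) 1)) := by
    rw [Measure.volume_eq_prod, ← Measure.prod_restrict]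
    exact (hφE.mul_prod hψ).const_mul _
  have hmeasd : AEStronglyMeasurable (fun y => (K (a,b) y - K (a',b) y) * f y)
      (volume.restrict (E ×ˢ Icc (0:ℝ) 1)) :=
    (((hK.comp measurable_prodMk_left).sub (hK.comp measurable_prodMk_left)).mul
      hf).aestronglyMeasurable.restrict
  have hZ2 : ∀ᵐ y : ℝ × ℝ ∂volume, y.2 ≠ b := by
    rw [ae_iff]
    have he : {y : ℝ × ℝ | ¬ y.2 ≠ b} = (univ : Set ℝ) ×ˢ ({b} : Set ℝ) := by
      ext y
      simp only [Set.mem_setOf_eq, ne_eq, not_not, Set.mem_prod, Set.mem_univ,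
        Set.mem_singleton_iff, true_and]
    rw [he, Measure.volume_eq_prod, Measure.prod_prod]
    simp
  have h01u : Icc (0:ℝ) 1 = uIcc (0:ℝ) 1 := (uIcc_of_le zero_le_one).symm
  have hIsub : uIcc a a' ⊆ Icc (0:ℝ) 1 := by
    rw [h01u]; exact uIcc_subset_uIcc (h01u ▸ ha) (h01u ▸ ha')
  have haefar : ∀ᵐ y ∂(volume.restrict (E ×ˢ Icc (0:ℝ) 1)),
      ‖(K (a,b) y - K (a',b) y) * f y‖ ≤
        4*C0*M*h * (|a - y.1| ^ (α - 2) * g₃ b y.2) := by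
    filter_upwards [ae_restrict_mem (hEm.prod measurableSet_Icc), ae_restrict_of_ae hZ2]
      with y hy hney
    have hyU : y ∈ unitSq := ⟨hEsub hy.1, hy.2⟩
    have hfar2 : 2*h ≤ |a - y.1| := hy.1.2
    have hbase : 0 < |a - y.1| := lt_of_lt_of_le hhalf hfar2
    have hg30 : 0 ≤ g₃ b y.2 := hg₃.2.1 b hb y.2 hy.2
    set Cb : ℝ := 4*C0*|a - y.1| ^ (α - 2) * g₃ b y.2 with hCb
    have hCb0 : 0 ≤ Cb := by positivity
    have hmvt : ‖K (a,b) y - K (a',b) y‖ ≤ Cb * h := by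
      have hstep : ∀ t ∈ uIcc a a',
          HasDerivWithinAt (fun t => K (t, b) y) (K₁ (t, b) y) (uIcc a a') t ∧
          ‖K₁ (t, b) y‖ ≤ Cb := by
        intro t ht
        have hta : |a - t| ≤ h := by
          rcases le_total a a' with hc | hc
          · rw [uIcc_of_le hc] at ht
            have hha : h = a' - a := by rw [hh, abs_sub_comm, abs_of_nonneg (by linarith)]
            rw [abs_le]; exact ⟨by linarith [ht.2], by linarith [ht.1]⟩
          · rw [uIcc_of_ge hc] at ht
            have hha : h = a - a' := by rw [hh, abs_of_nonneg (by linarith)]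
            rw [abs_le]; exact ⟨by linarith [ht.2], by linarith [ht.1]⟩
        have htri : |a - y.1| ≤ |a - t| + |t - y.1| := abs_sub_le a t y.1
        have h3 : |a - y.1| / 2 ≤ |t - y.1| := by linarith
        have htney : t ≠ y.1 := by
          intro he
          rw [he, sub_self, abs_zero] at h3
          linarith
        have hd := hd1 (t, b) ⟨hIsub ht, hb⟩ y hyU htney (fun hbe => hney hbe.symm)
        refine ⟨hd.1.hasDerivWithinAt, ?_⟩
        rw [Real.norm_eq_abs]
        refine hd.2.trans ?_
        have hr1 : |t - y.1| ^ (α - 2) ≤ (|a - y.1| / 2) ^ (α - 2) :=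
          Real.rpow_le_rpow_of_nonpos (by positivity) h3 (by linarith [hα.2])
        have hr2 : (|a - y.1| / 2) ^ (α - 2) ≤ 4 * |a - y.1| ^ (α - 2) := by
          rw [Real.div_rpow (abs_nonneg _) (by norm_num)]
          have e2 : (1/4 : ℝ) ≤ (2:ℝ) ^ (α - 2) := by
            have := Real.rpow_le_rpow_of_exponent_le one_le_two
              (by linarith [hα.1] : (-2:ℝ) ≤ α - 2)
            rw [show ((-2):ℝ) = ((-2:ℤ):ℝ) by norm_num, Real.rpow_intCast] at this
            norm_num at this
            linarith
          rw [div_le_iff₀ (by positivity)]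
          nlinarith [Real.rpow_nonneg (abs_nonneg (a - y.1)) (α - 2)]
        calc C0 * |(t, b).1 - y.1| ^ (α - 2) * g₃ (t, b).2 y.2
            = C0 * |t - y.1| ^ (α - 2) * g₃ b y.2 := rfl
          _ ≤ C0 * (4 * |a - y.1| ^ (α - 2)) * g₃ b y.2 := by
              exact mul_le_mul_of_nonneg_right
                (mul_le_mul_of_nonneg_left (hr1.trans hr2) hC0.le) hg30
          _ = Cb := by rw [hCb]; ring
      have := Convex.norm_image_sub_le_of_norm_hasDerivWithin_le
        (fun t ht => (hstep t ht).1) (fun t ht => (hstep t ht).2) (convex_uIcc a a')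
        right_mem_uIcc left_mem_uIcc
      rw [Real.norm_eq_abs] at this ⊢
      calc |K (a, b) y - K (a', b) y| ≤ Cb * |a - a'| := by
            simpa using this
        _ = Cb * h := by rw [hh]
    calc ‖(K (a,b) y - K (a',b) y) * f y‖ = |K (a,b) y - K (a',b) y| * |f y| := by
          rw [norm_mul]; rfl
      _ ≤ (Cb * h) * M := by
          refine mul_le_mul ?_ (hM y hyU) (abs_nonneg _) (by positivity)
          rw [← Real.norm_eq_abs]; exact hmvt
      _ = 4*C0*M*h * (|a - y.1| ^ (α - 2) * g₃ b y.2) := by rw [hCb]; ring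
  have hfarbd : |(∫ y in E ×ˢ Icc (0:ℝ) 1, K (a,b) y * f y) -
      ∫ y in E ×ˢ Icc (0:ℝ) 1, K (a',b) y * f y| ≤ 8*C0*M*(h^α)/(1-α) := by
    rw [← integral_sub hIE.1 hIE'.1]
    have hcongr : (fun y => K (a,b) y * f y - K (a',b) y * f y) =
        fun y => (K (a,b) y - K (a',b) y) * f y := by
      funext y; ring
    rw [hcongr]
    refine le_trans (norm_integral_le_of_norm_le hΨint haefar) ?_
    have heq : ∫ y in E ×ˢ Icc (0:ℝ) 1, 4*C0*M*h * (|a - y.1| ^ (α - 2) * g₃ b y.2) =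
        4*C0*M*h * ((∫ t in E, |a - t| ^ (α - 2)) * ∫ y in Icc (0:ℝ) 1, g₃ b y) := by
      rw [MeasureTheory.integral_const_mul, Measure.volume_eq_prod,
        setIntegral_prod_mul (fun t => |a - t| ^ (α - 2)) (g₃ b)]
    rw [heq]
    have hstep1 : (∫ t in E, |a - t| ^ (α - 2)) * (∫ y in Icc (0:ℝ) 1, g₃ b y) ≤
        2 * (2*h) ^ (α - 1) / (1 - α) := by
      nlinarith [mul_le_of_le_one_right hφE0 hψ1]
    have h2pow : (2*h) ^ (α - 1) ≤ h ^ (α - 1) := by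
      rw [Real.mul_rpow (by norm_num) hhpos.le]
      nlinarith [Real.rpow_le_one_of_one_le_of_nonpos one_le_two
        (by linarith [hα.2] : α - 1 ≤ 0), Real.rpow_nonneg hhpos.le (α - 1),
        Real.rpow_nonneg (by norm_num : (0:ℝ) ≤ 2) (α - 1)]
    have hha : h * h ^ (α - 1) = h ^ α := by
      nth_rewrite 1 [← Real.rpow_one h]
      rw [← Real.rpow_add hhpos]
      norm_num
    calc 4*C0*M*h * ((∫ t in E, |a - t| ^ (α - 2)) * ∫ y in Icc (0:ℝ) 1, g₃ b y)
        ≤ 4*C0*M*h * (2 * (2*h) ^ (α - 1) / (1 - α)) :=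
          mul_le_mul_of_nonneg_left hstep1 (by positivity)
      _ ≤ 4*C0*M*h * (2 * h ^ (α - 1) / (1 - α)) := by gcongr
      _ = 8*C0*M*(h * h ^ (α - 1))/(1-α) := by ring
      _ = 8*C0*M*(h^α)/(1-α) := by rw [hha]
  -- final assembly
  have p2 : (2*h)^α ≤ 2*h^α := by
    rw [Real.mul_rpow (by norm_num) hhpos.le]
    have h2 : (2:ℝ)^α ≤ 2 := by
      have := Real.rpow_le_rpow_of_exponent_le one_le_two hα.2.le
      rwa [Real.rpow_one] at this
    nlinarith [Real.rpow_nonneg hhpos.le α]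
  have p3 : (3*h)^α ≤ 3*h^α := by
    rw [Real.mul_rpow (by norm_num) hhpos.le]
    have h3 : (3:ℝ)^α ≤ 3 := by
      have := Real.rpow_le_rpow_of_exponent_le (by norm_num : (1:ℝ) ≤ 3) hα.2.le
      rwa [Real.rpow_one] at this
    nlinarith [Real.rpow_nonneg hhpos.le α]
  have hP0 : (0:ℝ) < h^α := Real.rpow_pos_of_pos hhpos α
  set IN := ∫ y in N₁ ×ˢ Icc (0:ℝ) 1, K (a, b) y * f y
  set IN' := ∫ y in N₁ ×ˢ Icc (0:ℝ) 1, K (a', b) y * f y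
  set IE := ∫ y in E ×ˢ Icc (0:ℝ) 1, K (a, b) y * f y
  set IE' := ∫ y in E ×ˢ Icc (0:ℝ) 1, K (a', b) y * f y
  calc |IN + IE - (IN' + IE')| ≤ |IN| + |IN'| + |IE - IE'| := by
        have := abs_add_le (IN - IN') (IE - IE')
        have h1 := abs_sub IN IN'
        have h2 := abs_abs IN
        calc |IN + IE - (IN' + IE')| = |(IN - IN') + (IE - IE')| := by ring_nf
          _ ≤ |IN - IN'| + |IE - IE'| := abs_add_le _ _
          _ ≤ (|IN| + |IN'|) + |IE - IE'| := by
              have := abs_sub_abs_le_abs_sub IN IN'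
              have := abs_sub IN IN'
              linarith [abs_sub IN IN']
    _ ≤ C0*M*(2*(2*h)^α/α) + C0*M*(2*(3*h)^α/α) + 8*C0*M*(h^α)/(1-α) := by
        linarith [hnear1, hnear2, hfarbd]
    _ ≤ C0*M*(2*(2*h^α)/α) + C0*M*(2*(3*h^α)/α) + 8*C0*M*(h^α)/(1-α) := by gcongr
    _ = C0*M*(h^α)*(4/α) + C0*M*(h^α)*(6/α) + C0*M*(h^α)*(8/(1-α)) := by ring
    _ ≤ C0*M*(h^α)*(18/(α*(1-α))) := by
        have key : 4/α + 6/α + 8/(1-α) ≤ 18/(α*(1-α)) := by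
          have e1 : 4/α + 6/α + 8/(1-α) = (10 - 2*α)/(α*(1-α)) := by
            field_simp; ring
          rw [e1, div_le_div_iff_of_pos_right (by positivity : (0:ℝ) < α*(1-α))]
          linarith
        nlinarith [mul_le_mul_of_nonneg_left key
          (by positivity : (0:ℝ) ≤ C0*M*(h^α))]
    _ = 18 / (α * (1 - α)) * C0 * M * h ^ α := by ring


end Helpers

/-- Potential theory: let `α ∈ (0,1)`. There is a constant `C > 0` depending only on `α` such
that for every `C0 > 0` and every measurable kernel `K` on `[0,1]² × [0,1]²`, differentiable
in the first pair of variables off the diagonals (with derivatives `K₁ = ∂_{x₁}K`,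
`K₂ = ∂_{x₂}K`) and satisfying
`|K(x,y)| ≤ C0 |x₁−y₁|^{α−1} g₁(x₂,y₂)`, `|K(x,y)| ≤ C0 |x₂−y₂|^{α−1} g₂(x₁,y₁)`,
`|∂_{x₁}K(x,y)| ≤ C0 |x₁−y₁|^{α−2} g₃(x₂,y₂)`, `|∂_{x₂}K(x,y)| ≤ C0 |x₂−y₂|^{α−2} g₄(x₁,y₁)`
with weights `gᵢ` of `L^∞L¹`-norm at most one, and every bounded measurable `f`,
the function `𝒦f(x) = ∫_{[0,1]²} K(x,y) f(y) dy` is well defined, bounded by `C C0 ‖f‖_∞`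
and `α`-Hölder with seminorm at most `C C0 ‖f‖_∞`. -/
theorem stmt12 (α : ℝ) (hα : α ∈ Set.Ioo (0:ℝ) 1) :
    ∃ C > 0, ∀ C0 : ℝ, 0 < C0 →
      ∀ K K₁ K₂ : ℝ × ℝ → ℝ × ℝ → ℝ, ∀ g₁ g₂ g₃ g₄ : ℝ → ℝ → ℝ,
        Measurable (Function.uncurry K) →
        GoodWeight g₁ → GoodWeight g₂ → GoodWeight g₃ → GoodWeight g₄ →
        (∀ x ∈ unitSq, ∀ y ∈ unitSq, x.1 ≠ y.1 →
          |K x y| ≤ C0 * |x.1 - y.1| ^ (α - 1) * g₁ x.2 y.2) →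
        (∀ x ∈ unitSq, ∀ y ∈ unitSq, x.2 ≠ y.2 →
          |K x y| ≤ C0 * |x.2 - y.2| ^ (α - 1) * g₂ x.1 y.1) →
        (∀ x ∈ unitSq, ∀ y ∈ unitSq, x.1 ≠ y.1 → x.2 ≠ y.2 →
          HasDerivAt (fun t : ℝ => K (t, x.2) y) (K₁ x y) x.1 ∧
          |K₁ x y| ≤ C0 * |x.1 - y.1| ^ (α - 2) * g₃ x.2 y.2) →
        (∀ x ∈ unitSq, ∀ y ∈ unitSq, x.1 ≠ y.1 → x.2 ≠ y.2 →
          HasDerivAt (fun t : ℝ => K (x.1, t) y) (K₂ x y) x.2 ∧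
          |K₂ x y| ≤ C0 * |x.2 - y.2| ^ (α - 2) * g₄ x.1 y.1) →
        ∀ f : ℝ × ℝ → ℝ, Measurable f → ∀ M : ℝ, (∀ y ∈ unitSq, |f y| ≤ M) →
          (∀ x ∈ unitSq, MeasureTheory.IntegrableOn (fun y => K x y * f y) unitSq) ∧
          (∀ x ∈ unitSq, |∫ y in unitSq, K x y * f y| ≤ C * C0 * M) ∧
          (∀ x ∈ unitSq, ∀ x' ∈ unitSq,
            |(∫ y in unitSq, K x y * f y) - ∫ y in unitSq, K x' y * f y| ≤
              C * C0 * M * dist x x' ^ α) := by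
  have hα0 := hα.1
  have hα1 : (0:ℝ) < 1 - α := by linarith [hα.2]
  refine ⟨40 / (α * (1 - α)), by positivity, ?_⟩
  intro C0 hC0 K K₁ K₂ g₁ g₂ g₃ g₄ hK hg₁ hg₂ hg₃ hg₄ hb1 hb2 hd1 hd2 f hf M hM
  have h00 : ((0:ℝ), (0:ℝ)) ∈ unitSq :=
    ⟨⟨le_refl 0, zero_le_one⟩, ⟨le_refl 0, zero_le_one⟩⟩
  have hM0 : 0 ≤ M := le_trans (abs_nonneg _) (hM _ h00)
  -- boundedness
  have hbdd : ∀ x ∈ unitSq, |∫ y in unitSq, K x y * f y| ≤ 2 * C0 * M / α := by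
    intro x hx
    have hkb := keyBound hα hC0 hK hg₁ hb1 hf hM hM0 x hx (Icc (0:ℝ) 1)
      measurableSet_Icc subset_rfl
    refine le_trans hkb.2 ?_
    have hnb := nearBound hα x.1 1 zero_le_one (Icc (0:ℝ) 1)
      (fun t ht => ⟨by linarith [ht.1, hx.1.2], by linarith [ht.2, hx.1.1]⟩)
    rw [Real.one_rpow] at hnb
    calc C0 * M * ∫ t in Icc (0:ℝ) 1, |x.1 - t| ^ (α - 1)
        ≤ C0 * M * (2 * 1 / α) := mul_le_mul_of_nonneg_left hnb (by positivity)
      _ = 2 * C0 * M / α := by ring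
  have hint : ∀ x ∈ unitSq, MeasureTheory.IntegrableOn (fun y => K x y * f y) unitSq :=
    fun x hx => (keyBound hα hC0 hK hg₁ hb1 hf hM hM0 x hx (Icc (0:ℝ) 1)
      measurableSet_Icc subset_rfl).1
  refine ⟨hint, ?_, ?_⟩
  · intro x hx
    refine le_trans (hbdd x hx) ?_
    rw [div_le_iff₀ hα0]
    have : 40 / (α * (1 - α)) * C0 * M * α = 40 / (1-α) * C0 * M := by
      field_simp
    rw [this]
    have h40 : (2:ℝ) ≤ 40 / (1 - α) := by
      rw [le_div_iff₀ hα1]; nlinarith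
    nlinarith [mul_nonneg hC0.le hM0]
  · -- Hölder continuity
    -- swapped data
    set K' : ℝ × ℝ → ℝ × ℝ → ℝ := fun x y => K (x.2, x.1) (y.2, y.1) with hK'def
    set K₁' : ℝ × ℝ → ℝ × ℝ → ℝ := fun x y => K₂ (x.2, x.1) (y.2, y.1) with hK₁'def
    set f' : ℝ × ℝ → ℝ := fun y => f (y.2, y.1) with hf'def
    have hK' : Measurable (Function.uncurry K') := by
      exact hK.comp ((measurable_swap.comp measurable_fst).prodMk
        (measurable_swap.comp measurable_snd))
    have hf' : Measurable f' := hf.comp measurable_swap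
    have hM' : ∀ y ∈ unitSq, |f' y| ≤ M := fun y hy => hM (y.2, y.1) ⟨hy.2, hy.1⟩
    have hb1' : ∀ x ∈ unitSq, ∀ y ∈ unitSq, x.1 ≠ y.1 →
        |K' x y| ≤ C0 * |x.1 - y.1| ^ (α - 1) * g₂ x.2 y.2 := by
      intro x hx y hy hne
      exact hb2 (x.2, x.1) ⟨hx.2, hx.1⟩ (y.2, y.1) ⟨hy.2, hy.1⟩ hne
    have hd1' : ∀ x ∈ unitSq, ∀ y ∈ unitSq, x.1 ≠ y.1 → x.2 ≠ y.2 →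
        HasDerivAt (fun t : ℝ => K' (t, x.2) y) (K₁' x y) x.1 ∧
        |K₁' x y| ≤ C0 * |x.1 - y.1| ^ (α - 2) * g₄ x.2 y.2 := by
      intro x hx y hy hne1 hne2
      have := hd2 (x.2, x.1) ⟨hx.2, hx.1⟩ (y.2, y.1) ⟨hy.2, hy.1⟩ hne2 hne1
      exact ⟨this.1, this.2⟩
    -- swap integral identity
    have hswapInt : ∀ G : ℝ × ℝ → ℝ,
        (∫ y in unitSq, G (y.2, y.1)) = ∫ y in unitSq, G y := by
      intro G
      have hs : MeasurePreserving (Prod.swap : ℝ × ℝ → ℝ × ℝ)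
          (volume.prod volume) (volume.prod volume) := Measure.measurePreserving_swap
      rw [← Measure.volume_eq_prod] at hs
      have hpre : (Prod.swap : ℝ × ℝ → ℝ × ℝ) ⁻¹' unitSq = unitSq := by
        ext y
        simp only [Set.mem_preimage, unitSq, Set.mem_prod, Prod.fst_swap, Prod.snd_swap]
        tauto
      have := hs.setIntegral_preimage_emb
        (MeasurableEquiv.prodComm (α := ℝ) (β := ℝ)).measurableEmbedding G unitSq
      rw [hpre] at this
      exact this
    intro x hx x' hx'
    obtain ⟨a, b⟩ := x
    obtain ⟨a', b'⟩ := x'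
    have ha : a ∈ Icc (0:ℝ) 1 := hx.1
    have hbm : b ∈ Icc (0:ℝ) 1 := hx.2
    have ha' : a' ∈ Icc (0:ℝ) 1 := hx'.1
    have hb' : b' ∈ Icc (0:ℝ) 1 := hx'.2
    have hdista : |a - a'| ≤ dist (a, b) (a', b') := by
      rw [Prod.dist_eq]
      exact le_trans (le_of_eq (Real.dist_eq a a').symm) (le_max_left _ _)
    have hdistb : |b - b'| ≤ dist (a, b) (a', b') := by
      rw [Prod.dist_eq]
      exact le_trans (le_of_eq (Real.dist_eq b b').symm) (le_max_right _ _)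
    have hd0 : 0 ≤ dist (a, b) (a', b') := dist_nonneg
    set δ := dist (a, b) (a', b') with hδ
    rcases le_or_gt δ (1/2) with hcase | hcase
    · -- both moves are short
      have T1 := moveFirst hα hC0 hK hg₁ hg₃ hb1 hd1 hf hM hM0 ha ha' hbm
        (le_trans hdista hcase)
      have T2 := moveFirst hα hC0 hK' hg₂ hg₄ hb1' hd1' hf' hM' hM0 hbm hb' ha'
        (le_trans hdistb hcase)
      have hid1 : (∫ y in unitSq, K' (b, a') y * f' y) =
          ∫ y in unitSq, K (a', b) y * f y :=
        hswapInt (fun y => K (a', b) y * f y)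
      have hid2 : (∫ y in unitSq, K' (b', a') y * f' y) =
          ∫ y in unitSq, K (a', b') y * f y :=
        hswapInt (fun y => K (a', b') y * f y)
      rw [hid1, hid2] at T2
      have hra : |a - a'| ^ α ≤ δ ^ α := Real.rpow_le_rpow (abs_nonneg _) hdista hα0.le
      have hrb : |b - b'| ^ α ≤ δ ^ α := Real.rpow_le_rpow (abs_nonneg _) hdistb hα0.le
      have hcomb := abs_sub ((∫ y in unitSq, K (a, b) y * f y))
        ((∫ y in unitSq, K (a', b') y * f y))
      have htri : |(∫ y in unitSq, K (a, b) y * f y) -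
          ∫ y in unitSq, K (a', b') y * f y| ≤
          |(∫ y in unitSq, K (a, b) y * f y) - ∫ y in unitSq, K (a', b) y * f y| +
          |(∫ y in unitSq, K (a', b) y * f y) - ∫ y in unitSq, K (a', b') y * f y| :=
        abs_sub_le _ _ _
      have hC18 : (0:ℝ) ≤ 18 / (α * (1 - α)) * C0 * M := by positivity
      calc |(∫ y in unitSq, K (a, b) y * f y) - ∫ y in unitSq, K (a', b') y * f y|
          ≤ 18 / (α * (1 - α)) * C0 * M * |a - a'| ^ α +
            18 / (α * (1 - α)) * C0 * M * |b - b'| ^ α := by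
            refine le_trans htri (add_le_add T1 T2)
        _ ≤ 18 / (α * (1 - α)) * C0 * M * δ ^ α +
            18 / (α * (1 - α)) * C0 * M * δ ^ α := by
            exact add_le_add (mul_le_mul_of_nonneg_left hra hC18)
              (mul_le_mul_of_nonneg_left hrb hC18)
        _ = 36 / (α * (1 - α)) * C0 * M * δ ^ α := by ring
        _ ≤ 40 / (α * (1 - α)) * C0 * M * δ ^ α := by
            have : (0:ℝ) ≤ δ ^ α := Real.rpow_nonneg hd0 α
            have h36 : (36:ℝ) / (α * (1 - α)) ≤ 40 / (α * (1 - α)) := by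
              rw [div_le_div_iff_of_pos_right (by positivity : (0:ℝ) < α * (1-α))]
              norm_num
            nlinarith [mul_nonneg (mul_nonneg hC0.le hM0) this]
    · -- far apart: use the trivial bound
      have hδ1 : δ ≤ 1 := by
        rw [hδ, Prod.dist_eq, Real.dist_eq, Real.dist_eq]
        apply max_le
        · rw [abs_le]
          exact ⟨by linarith [ha.1, ha'.2], by linarith [ha.2, ha'.1]⟩
        · rw [abs_le]
          exact ⟨by linarith [hbm.1, hb'.2], by linarith [hbm.2, hb'.1]⟩
      have hδpos : 0 < δ := lt_trans (by norm_num) hcase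
      have hδα : δ ≤ δ ^ α := by
        have := Real.rpow_le_rpow_of_exponent_ge hδpos hδ1 hα.2.le
        rwa [Real.rpow_one] at this
      have h1 := hbdd (a, b) hx
      have h2 := hbdd (a', b') hx'
      have habs : |(∫ y in unitSq, K (a, b) y * f y) -
          ∫ y in unitSq, K (a', b') y * f y| ≤ 4 * C0 * M / α := by
        have := abs_sub ((∫ y in unitSq, K (a, b) y * f y))
          ((∫ y in unitSq, K (a', b') y * f y))
        calc |(∫ y in unitSq, K (a, b) y * f y) - ∫ y in unitSq, K (a', b') y * f y|
            ≤ |∫ y in unitSq, K (a, b) y * f y| + |∫ y in unitSq, K (a', b') y * f y| :=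
              abs_sub _ _
          _ ≤ 2 * C0 * M / α + 2 * C0 * M / α := add_le_add h1 h2
          _ = 4 * C0 * M / α := by ring
      refine le_trans habs ?_
      have hkey : 4 * C0 * M / α ≤ 40 / (α * (1 - α)) * C0 * M * (1/2) := by
        rw [div_le_iff₀ hα0]
        have he : 40 / (α * (1 - α)) * C0 * M * (1/2) * α = 20 / (1 - α) * C0 * M := by
          field_simp; ring
        rw [he]
        have h20 : (4:ℝ) ≤ 20 / (1 - α) := by
          rw [le_div_iff₀ hα1]; nlinarith
        nlinarith [mul_nonneg hC0.le hM0]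
      refine le_trans hkey ?_
      have hhalf : (1/2 : ℝ) ≤ δ ^ α := le_trans (by linarith) hδα
      exact mul_le_mul_of_nonneg_left hhalf (by positivity)
end

section
/- Let m ≥ 2 be an integer and c > 0. Let r : [0,π] × ℝ → ℝ be continuous, continuously differentiable in its second variable, 2π-periodic in its second variable, satisfying r(ϕ,−η) = r(ϕ,η) and r(ϕ, η + 2π/m) = r(ϕ,η) for all ϕ, η, and r(ϕ,η) ≥ c·sin ϕ for all ϕ ∈ [0,π], η ∈ ℝ. Then for every z ∈ ℝ: ∫₀^π ∫₀^{2π} sin ϕ · ∂_η(r(ϕ,η)·cos η) / (r(ϕ,η)² + (z − cos ϕ)²)^{1/2} dη dϕ = 0 and ∫₀^π ∫₀^{2π} sin ϕ · ∂_η(r(ϕ,η)·sin η) / (r(ϕ,η)² + (z − cos ϕ)²)^{1/2} dη dϕ = 0. -/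
open Real Set MeasureTheory intervalIntegral

/-!
For fixed `ϕ`, the two inner integrands are the real and imaginary parts of
`g η = sin ϕ · ∂_η(r e^{iη}) / √(r² + (z - cos ϕ)²)`. The `m`-fold symmetry of `r` gives
`g (η + 2π/m) = e^{2πi/m} g η`; as `g` is `2π`-periodic, shifting its integral over a period by
`2π/m` multiplies it by `e^{2πi/m} ≠ 1`, so the integral vanishes.
-/

theorem Function.Periodic.deriv {𝕜 F : Type*} [NontriviallyNormedField 𝕜] [NormedAddCommGroup F]
    [NormedSpace 𝕜 F] {f : 𝕜 → F} {c : 𝕜} (hf : Function.Periodic f c) :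
    Function.Periodic (_root_.deriv f) c := fun x => by
  rw [← deriv_comp_add_const, show (fun y => f (y + c)) = f from funext hf]

theorem Function.Periodic.intervalIntegral_eq_zero_of_map_add_eq_smul {𝕜 E : Type*}
    [NormedDivisionRing 𝕜] [NormedAddCommGroup E] [NormedSpace ℝ E] [Module 𝕜 E]
    [NormSMulClass 𝕜 E] [SMulCommClass ℝ 𝕜 E] {g : ℝ → E} {T α : ℝ} {w : 𝕜}
    (hg : Function.Periodic g T) (hrot : ∀ x, g (x + α) = w • g x) (hw : w ≠ 1) (t : ℝ) :
    ∫ x in t..t + T, g x = 0 := by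
  have hshift : ∫ x in t..t + T, g x = w • ∫ x in t..t + T, g x := by
    calc ∫ x in t..t + T, g x = ∫ x in t + α..t + α + T, g x := hg.intervalIntegral_add_eq t _
      _ = ∫ x in t..t + T, g (x + α) := by rw [integral_comp_add_right, add_right_comm]
      _ = w • ∫ x in t..t + T, g x := by simp only [hrot, intervalIntegral.integral_smul]
  have : (w - 1) • ∫ x in t..t + T, g x = 0 := by rw [sub_smul, one_smul, ← hshift, sub_self]
  exact (smul_eq_zero.mp this).resolve_left (sub_ne_zero.mpr hw)

theorem Complex.exp_ofReal_mul_I_ne_one {α : ℝ} (h0 : 0 < α) (h1 : α < 2 * π) :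
    Complex.exp (α * Complex.I) ≠ 1 := by
  rw [Ne, Complex.exp_eq_one_iff]
  rintro ⟨n, hn⟩
  have h : α = n * (2 * π) := by simpa using congrArg Complex.im hn
  have hn0 : (0 : ℝ) < n := by nlinarith [pi_pos]
  have hn1 : (n : ℝ) < 1 := by nlinarith [pi_pos]
  have : (0 : ℤ) < n := by exact_mod_cast hn0
  have : n < 1 := by exact_mod_cast hn1
  omega

theorem Complex.exp_two_pi_div_mul_I_ne_one {m : ℕ} (hm : 2 ≤ m) :
    Complex.exp ((2 * π / m : ℝ) * Complex.I) ≠ 1 := by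
  have hm' : (2 : ℝ) ≤ m := by exact_mod_cast hm
  refine Complex.exp_ofReal_mul_I_ne_one (by positivity) ?_
  rw [div_lt_iff₀ (by positivity)]
  nlinarith [pi_pos]

theorem integral_slice_eq_zero_of_periodic {m : ℕ} (hm : 2 ≤ m) {R R' : ℝ → ℝ}
    (hd : ∀ η, HasDerivAt R (R' η) η) (hR' : Continuous R')
    (hRα : Function.Periodic R (2 * π / m)) (hR : ∀ η, R η ≠ 0) (s a : ℝ) :
    (∫ η in (0:ℝ)..(2 * π),
        s * (R' η * Real.cos η - R η * Real.sin η) / Real.sqrt (R η ^ 2 + a ^ 2)) = 0 ∧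
    (∫ η in (0:ℝ)..(2 * π),
        s * (R' η * Real.sin η + R η * Real.cos η) / Real.sqrt (R η ^ 2 + a ^ 2)) = 0 := by
  set α := 2 * π / m with hα
  have hR'α : Function.Periodic R' α := by
    rw [show R' = deriv R from funext fun η => (hd η).deriv.symm]; exact hRα.deriv
  have h2π : ∀ f : ℝ → ℝ, Function.Periodic f α → Function.Periodic f (2 * π) := fun f hf => by
    simpa [hα, mul_div_cancel₀ _ (Nat.cast_ne_zero.mpr (by omega) : (m : ℝ) ≠ 0)] using hf.nat_mul m
  have hden : ∀ η, Real.sqrt (R η ^ 2 + a ^ 2) ≠ 0 := fun η =>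
    (Real.sqrt_pos.mpr (by positivity [hR η])).ne'
  have hRc : Continuous R := continuous_iff_continuousAt.mpr fun η => (hd η).continuousAt
  set g : ℝ → ℂ := fun η => ((s / Real.sqrt (R η ^ 2 + a ^ 2) : ℝ) : ℂ) *
    ((R' η + R η * Complex.I) * Complex.exp (η * Complex.I))
  have hg : Continuous g := by
    have : Continuous fun η => s / Real.sqrt (R η ^ 2 + a ^ 2) :=
      continuous_const.div (by fun_prop) hden
    fun_prop
  have hg_per : Function.Periodic g (2 * π) := fun η => by
    simp only [g, h2π R hRα η, h2π R' hR'α η, Complex.ofReal_add, add_mul, Complex.exp_add,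
      Complex.ofReal_mul, Complex.ofReal_ofNat, Complex.exp_two_pi_mul_I, mul_one]
  have hg_rot : ∀ η, g (η + α) = Complex.exp (α * Complex.I) • g η := fun η => by
    simp only [g, hRα η, hR'α η, Complex.ofReal_add, add_mul, Complex.exp_add, smul_eq_mul]
    ring
  have hint : ∫ η in (0:ℝ)..(2 * π), g η = 0 := by
    simpa using hg_per.intervalIntegral_eq_zero_of_map_add_eq_smul hg_rot
      (Complex.exp_two_pi_div_mul_I_ne_one hm) 0
  have hgi := hg.intervalIntegrable (μ := volume) 0 (2 * π)
  constructor
  · calc _ = ∫ η in (0:ℝ)..(2 * π), (g η).re := integral_congr fun η _ => by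
            simp only [g, Complex.mul_re, Complex.mul_im, Complex.add_re, Complex.add_im,
              Complex.ofReal_re, Complex.ofReal_im, Complex.I_re, Complex.I_im,
              Complex.exp_ofReal_mul_I_re, Complex.exp_ofReal_mul_I_im]
            ring
      _ = 0 := (intervalIntegral_re hgi).trans (by rw [hint, map_zero])
  · calc _ = ∫ η in (0:ℝ)..(2 * π), (g η).im := integral_congr fun η _ => by
            simp only [g, Complex.mul_re, Complex.mul_im, Complex.add_re, Complex.add_im,
              Complex.ofReal_re, Complex.ofReal_im, Complex.I_re, Complex.I_im,
              Complex.exp_ofReal_mul_I_re, Complex.exp_ofReal_mul_I_im]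
            ring
      _ = 0 := (intervalIntegral_im hgi).trans (by rw [hint, map_zero])

theorem stmt13_general (m : ℕ) (hm : 2 ≤ m) (c : ℝ) (hc : 0 < c)
    (r r' : ℝ → ℝ → ℝ)
    (hderiv : ∀ ϕ ∈ Set.Icc (0:ℝ) π, ∀ η : ℝ, HasDerivAt (r ϕ) (r' ϕ η) η)
    (hr'_cont : ContinuousOn (fun p : ℝ × ℝ => r' p.1 p.2) (Set.Icc 0 π ×ˢ Set.univ))
    (hfold : ∀ ϕ ∈ Set.Icc (0:ℝ) π, ∀ η : ℝ, r ϕ (η + 2 * π / m) = r ϕ η)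
    (hlow : ∀ ϕ ∈ Set.Icc (0:ℝ) π, ∀ η : ℝ, c * Real.sin ϕ ≤ r ϕ η) :
    ∀ z : ℝ,
      (∫ ϕ in (0:ℝ)..π, ∫ η in (0:ℝ)..(2 * π),
          Real.sin ϕ * (r' ϕ η * Real.cos η - r ϕ η * Real.sin η) /
            Real.sqrt (r ϕ η ^ 2 + (z - Real.cos ϕ) ^ 2)) = 0 ∧
      (∫ ϕ in (0:ℝ)..π, ∫ η in (0:ℝ)..(2 * π),
          Real.sin ϕ * (r' ϕ η * Real.sin η + r ϕ η * Real.cos η) /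
            Real.sqrt (r ϕ η ^ 2 + (z - Real.cos ϕ) ^ 2)) = 0 := by
  intro z
  have hslice : ∀ ϕ ∈ Set.Icc (0:ℝ) π,
      (∫ η in (0:ℝ)..(2 * π),
          Real.sin ϕ * (r' ϕ η * Real.cos η - r ϕ η * Real.sin η) /
            Real.sqrt (r ϕ η ^ 2 + (z - Real.cos ϕ) ^ 2)) = 0 ∧
      (∫ η in (0:ℝ)..(2 * π),
          Real.sin ϕ * (r' ϕ η * Real.sin η + r ϕ η * Real.cos η) /
            Real.sqrt (r ϕ η ^ 2 + (z - Real.cos ϕ) ^ 2)) = 0 := by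
    intro ϕ hϕ
    rcases (sin_nonneg_of_nonneg_of_le_pi hϕ.1 hϕ.2).eq_or_lt with hs | hs
    · simp [← hs]
    · exact integral_slice_eq_zero_of_periodic hm (hderiv ϕ hϕ)
        (hr'_cont.comp_continuous (Continuous.prodMk_right ϕ) fun _ => ⟨hϕ, trivial⟩)
        (hfold ϕ hϕ) (fun η => ((mul_pos hc hs).trans_le (hlow ϕ hϕ η)).ne') _ _
  have hvanish : ∀ F : ℝ → ℝ, (∀ ϕ ∈ Set.Icc (0:ℝ) π, F ϕ = 0) → ∫ ϕ in (0:ℝ)..π, F ϕ = 0 :=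
    fun F hF => (integral_congr fun ϕ hϕ => hF ϕ (uIcc_of_le pi_pos.le ▸ hϕ)).trans integral_zero
  exact ⟨hvanish _ fun ϕ hϕ => (hslice ϕ hϕ).1, hvanish _ fun ϕ hϕ => (hslice ϕ hϕ).2⟩

/-- Let `m ≥ 2` and `c > 0`. Let `r : [0,π] × ℝ → ℝ` be continuous, continuously
differentiable in its second variable (with derivative `r'`), `2π`-periodic and even in the
second variable, invariant under `η ↦ η + 2π/m`, and with `r(ϕ,η) ≥ c sin ϕ`. Then for every
`z ∈ ℝ` the two double integrals
`∫₀^π ∫₀^{2π} sin ϕ ∂_η(r cos η)/(r² + (z − cos ϕ)²)^{1/2}` and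
`∫₀^π ∫₀^{2π} sin ϕ ∂_η(r sin η)/(r² + (z − cos ϕ)²)^{1/2}` vanish. -/
theorem stmt13 (m : ℕ) (hm : 2 ≤ m) (c : ℝ) (hc : 0 < c)
    (r r' : ℝ → ℝ → ℝ)
    (hr_cont : ContinuousOn (fun p : ℝ × ℝ => r p.1 p.2) (Set.Icc 0 π ×ˢ Set.univ))
    (hderiv : ∀ ϕ ∈ Set.Icc (0:ℝ) π, ∀ η : ℝ, HasDerivAt (r ϕ) (r' ϕ η) η)
    (hr'_cont : ContinuousOn (fun p : ℝ × ℝ => r' p.1 p.2) (Set.Icc 0 π ×ˢ Set.univ))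
    (hper : ∀ ϕ ∈ Set.Icc (0:ℝ) π, ∀ η : ℝ, r ϕ (η + 2 * π) = r ϕ η)
    (heven : ∀ ϕ ∈ Set.Icc (0:ℝ) π, ∀ η : ℝ, r ϕ (-η) = r ϕ η)
    (hfold : ∀ ϕ ∈ Set.Icc (0:ℝ) π, ∀ η : ℝ, r ϕ (η + 2 * π / m) = r ϕ η)
    (hlow : ∀ ϕ ∈ Set.Icc (0:ℝ) π, ∀ η : ℝ, c * Real.sin ϕ ≤ r ϕ η) :
    ∀ z : ℝ,
      (∫ ϕ in (0:ℝ)..π, ∫ η in (0:ℝ)..(2 * π),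
          Real.sin ϕ * (r' ϕ η * Real.cos η - r ϕ η * Real.sin η) /
            Real.sqrt (r ϕ η ^ 2 + (z - Real.cos ϕ) ^ 2)) = 0 ∧
      (∫ ϕ in (0:ℝ)..π, ∫ η in (0:ℝ)..(2 * π),
          Real.sin ϕ * (r' ϕ η * Real.sin η + r ϕ η * Real.cos η) /
            Real.sqrt (r ϕ η ^ 2 + (z - Real.cos ϕ) ^ 2)) = 0 :=
  stmt13_general m hm c hc r r' hderiv hr'_cont hfold hlow
end
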